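/- arXiv:1310.4400 — 8 statements merged into one kernel-verified Lean document; each statement's English description precedes it below -/
import Mathlib

section
/- Let μ₁ be a probability measure on (0,∞) possessing a continuous Lebesgue density f₀ and satisfying ∫ y dμ₁(y) = 1, and let μ₂ be the probability measure on (0,∞) with Lebesgue density y ↦ y·f₀(y). Fix c > 0 and define for x > 0 the price function p(x) = x·μ₂((c/x, ∞)) − c·μ₁((c/x, ∞)). Then p is differentiable on (0,∞) and its derivative (the 'delta') is p'(x) = μ₂((c/x, ∞)) for every x > 0. -/
/-!
Write `Fᵢ(a)` for the tail mass `μᵢ((a,∞))`. Since both measures are finite (`μ₂` has total mass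
`∫ y dμ₁ = 1`), `Fᵢ(a)` is the integral of the density over `(a,∞)`, so by the fundamental
theorem of calculus `F₁' = -f₀` and `F₂'(a) = -a f₀(a)` for `a > 0`. Differentiating
`p(x) = x F₂(c/x) - c F₁(c/x)` by the chain rule, the two density terms are both
`(c/x)² f₀(c/x)` and cancel, leaving `F₂(c/x)`.
-/

open MeasureTheory Filter Set

lemma isProbabilityMeasure_withDensity_ofReal {α : Type*} [MeasurableSpace α] {ν : Measure α}
    {g : α → ℝ} (hg : 0 ≤ᵐ[ν] g) (hg_int : ∫ y, g y ∂ν = 1) :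
    IsProbabilityMeasure (ν.withDensity fun y => ENNReal.ofReal (g y)) := by
  have hint : Integrable g ν := Integrable.of_integral_ne_zero (by rw [hg_int]; exact one_ne_zero)
  constructor
  rw [withDensity_apply _ MeasurableSet.univ, Measure.restrict_univ,
    ← ofReal_integral_eq_lintegral_ofReal hint hg, hg_int, ENNReal.ofReal_one]

theorem hasDerivAt_integral_Ioi {f : ℝ → ℝ} {a b : ℝ} (hf : IntegrableOn f (Ioi b)) (hba : b < a)
    (hfa : ContinuousAt f a) : HasDerivAt (fun u => ∫ y in Ioi u, f y) (-f a) a := by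
  have hFTC : HasDerivAt (fun u => ∫ y in b..u, f y) (f a) a :=
    intervalIntegral.integral_hasDerivAt_right
      ((intervalIntegrable_iff_integrableOn_Ioc_of_le hba.le).2 (hf.mono_set Ioc_subset_Ioi_self))
      (AEStronglyMeasurable.stronglyMeasurableAtFilter_of_mem hf.aestronglyMeasurable
        (Ioi_mem_nhds hba)) hfa
  refine (hFTC.const_sub (∫ y in Ioi b, f y)).congr_of_eventuallyEq ?_
  filter_upwards [Ioi_mem_nhds hba] with u hu
  rw [← intervalIntegral.integral_Ioi_sub_Ioi hf hu.le, sub_sub_cancel]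

theorem hasDerivAt_integral_Ioi_div {f : ℝ → ℝ} {c x : ℝ} (hf : IntegrableOn f (Ioi 0))
    (hc : 0 < c) (hx : 0 < x) (hfc : ContinuousAt f (c / x)) :
    HasDerivAt (fun z => ∫ y in Ioi (c / z), f y) (f (c / x) * (c / x ^ 2)) x := by
  have hdiv : HasDerivAt (fun z => c / z) (-(c / x ^ 2)) x := by
    simpa only [div_eq_mul_inv, mul_neg] using (hasDerivAt_inv hx.ne').const_mul c
  exact ((hasDerivAt_integral_Ioi hf (div_pos hc hx) hfc).comp x hdiv).congr_deriv
    (neg_mul_neg _ _)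

section DensityOnIoi

variable {f : ℝ → ℝ}

lemma withDensity_restrict_Ioi_apply_Ioi {a : ℝ} (ha : 0 ≤ a) :
    (volume.restrict (Ioi 0)).withDensity (fun y => ENNReal.ofReal (f y)) (Ioi a)
      = ∫⁻ y in Ioi a, ENNReal.ofReal (f y) := by
  rw [withDensity_apply _ measurableSet_Ioi, Measure.restrict_restrict measurableSet_Ioi,
    inter_eq_left.mpr (Ioi_subset_Ioi ha)]

variable (hnn : ∀ y ∈ Ioi (0 : ℝ), 0 ≤ f y)
include hnn

lemma integrableOn_Ioi_of_isFiniteMeasure_withDensity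
    [IsFiniteMeasure ((volume.restrict (Ioi 0)).withDensity fun y => ENNReal.ofReal (f y))]
    (hf : AEStronglyMeasurable f (volume.restrict (Ioi 0))) : IntegrableOn f (Ioi 0) := by
  rw [IntegrableOn, ← lintegral_ofReal_ne_top_iff_integrable hf
    (ae_restrict_of_forall_mem measurableSet_Ioi hnn), ← withDensity_restrict_Ioi_apply_Ioi le_rfl]
  exact measure_ne_top _ _

lemma toReal_withDensity_restrict_Ioi_apply_Ioi (hf : IntegrableOn f (Ioi 0)) {a : ℝ}
    (ha : 0 ≤ a) :
    ((volume.restrict (Ioi 0)).withDensity (fun y => ENNReal.ofReal (f y)) (Ioi a)).toReal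
      = ∫ y in Ioi a, f y := by
  rw [withDensity_restrict_Ioi_apply_Ioi ha, integral_eq_lintegral_of_nonneg_ae
    (ae_restrict_of_forall_mem measurableSet_Ioi fun y hy => hnn y (ha.trans_lt hy))
    (hf.mono_set (Ioi_subset_Ioi ha)).aestronglyMeasurable]

lemma withDensity_restrict_Ioi_mul_id (hf : AEMeasurable f (volume.restrict (Ioi 0))) :
    (volume.restrict (Ioi 0)).withDensity (fun y => ENNReal.ofReal (y * f y))
      = ((volume.restrict (Ioi 0)).withDensity fun y => ENNReal.ofReal (f y)).withDensity
          fun y => ENNReal.ofReal y := by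
  rw [← withDensity_mul₀ hf.ennreal_ofReal ENNReal.measurable_ofReal.aemeasurable]
  refine withDensity_congr_ae (ae_restrict_of_forall_mem measurableSet_Ioi fun y hy => ?_)
  rw [Pi.mul_apply, ← ENNReal.ofReal_mul (hnn y hy), mul_comm]

end DensityOnIoi

/-- Let `μ₁` be a probability measure on `(0,∞)` with continuous Lebesgue
density `f₀` and mean `∫ y dμ₁ = 1`, and let `μ₂` be the probability measure on `(0,∞)` with
Lebesgue density `y ↦ y·f₀(y)`.  For `c > 0` define `p(x) = x·μ₂((c/x,∞)) − c·μ₁((c/x,∞))`.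
Then `p` is differentiable on `(0,∞)` with derivative (the "delta")
`p'(x) = μ₂((c/x,∞))` for every `x > 0`. -/
theorem statement3
    (f₀ : ℝ → ℝ) (hf₀c : ContinuousOn f₀ (Set.Ioi 0)) (hf₀nn : ∀ y, 0 ≤ f₀ y)
    (μ₁ μ₂ : Measure ℝ)
    (hμ₁ : μ₁ = (volume.restrict (Set.Ioi 0)).withDensity fun y => ENNReal.ofReal (f₀ y))
    [IsProbabilityMeasure μ₁]
    (hmean : ∫ y, y ∂μ₁ = 1)
    (hμ₂ : μ₂ = (volume.restrict (Set.Ioi 0)).withDensity fun y => ENNReal.ofReal (y * f₀ y))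
    (c : ℝ) (hc : 0 < c)
    (x : ℝ) (hx : 0 < x) :
    HasDerivAt
      (fun z => z * (μ₂ (Set.Ioi (c / z))).toReal - c * (μ₁ (Set.Ioi (c / z))).toReal)
      ((μ₂ (Set.Ioi (c / x))).toReal) x := by
  subst hμ₁ hμ₂
  have hnn₁ : ∀ y ∈ Ioi (0 : ℝ), 0 ≤ f₀ y := fun y _ => hf₀nn y
  have hnn₂ : ∀ y ∈ Ioi (0 : ℝ), 0 ≤ y * f₀ y := fun y hy => mul_nonneg hy.le (hf₀nn y)
  have hc₂ : ContinuousOn (fun y => y * f₀ y) (Ioi 0) := continuousOn_id.mul hf₀c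
  have hm₁ : AEStronglyMeasurable f₀ (volume.restrict (Ioi 0)) :=
    hf₀c.aestronglyMeasurable measurableSet_Ioi
  have : IsProbabilityMeasure ((volume.restrict (Ioi 0)).withDensity
      fun y => ENNReal.ofReal (y * f₀ y)) := by
    rw [withDensity_restrict_Ioi_mul_id hnn₁ hm₁.aemeasurable]
    exact isProbabilityMeasure_withDensity_ofReal ((withDensity_absolutelyContinuous _ _).ae_le
      (ae_restrict_of_forall_mem measurableSet_Ioi fun y hy => hy.le)) hmean
  have hint₁ := integrableOn_Ioi_of_isFiniteMeasure_withDensity hnn₁ hm₁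
  have hint₂ := integrableOn_Ioi_of_isFiniteMeasure_withDensity hnn₂
    (hc₂.aestronglyMeasurable measurableSet_Ioi)
  have ha : 0 < c / x := div_pos hc hx
  have hd₁ := hasDerivAt_integral_Ioi_div hint₁ hc hx (hf₀c.continuousAt (Ioi_mem_nhds ha))
  have hd₂ := hasDerivAt_integral_Ioi_div hint₂ hc hx (hc₂.continuousAt (Ioi_mem_nhds ha))
  have hp : HasDerivAt
      (fun z => z * (∫ y in Ioi (c / z), y * f₀ y) - c * ∫ y in Ioi (c / z), f₀ y)
      (∫ y in Ioi (c / x), y * f₀ y) x := by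
    refine (((hasDerivAt_id' x).mul hd₂).sub (hd₁.const_mul c)).congr_deriv ?_
    field_simp
    ring
  rw [toReal_withDensity_restrict_Ioi_apply_Ioi hnn₂ hint₂ ha.le]
  refine hp.congr_of_eventuallyEq ?_
  filter_upwards [Ioi_mem_nhds hx] with z hz
  rw [toReal_withDensity_restrict_Ioi_apply_Ioi hnn₁ hint₁ (div_pos hc hz).le,
    toReal_withDensity_restrict_Ioi_apply_Ioi hnn₂ hint₂ (div_pos hc hz).le]
end

section
/- Let Q and Q_1 be probability measures on a measurable space with Q_1 ≪ Q and Radon–Nikodym derivative L = dQ_1/dQ. Fix c ≥ 0 and let φ = 1{L > c} be the Neyman–Pearson indicator test. Then the power of φ admits the representation E_{Q_1}[φ] = inf over k ≥ 0 of ( k·E_Q[φ] + E_Q[(L − k)⁺] ), and the infimum is attained at k = c; here x⁺ = max(x,0). -/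
open MeasureTheory Filter Set

/-- **Krafft–Plachky power identity.** Let `Q₁ ≪ Q` with Radon–Nikodym
derivative `L = dQ₁/dQ`, fix `c ≥ 0` and let `φ = 1{L > c}` be the Neyman–Pearson test.
Then the power of `φ` satisfies
`E_{Q₁}[φ] = inf_{k ≥ 0} ( k·E_Q[φ] + E_Q[(L − k)⁺] )`, the infimum being attained at
`k = c`. -/
theorem statement5
    {Ω : Type*} [MeasurableSpace Ω]
    (Q Q₁ : Measure Ω) [IsProbabilityMeasure Q] [IsProbabilityMeasure Q₁]
    (hac : Q₁ ≪ Q)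
    (L : Ω → ℝ) (hLm : Measurable L) (hLnn : ∀ᵐ ω ∂Q, 0 ≤ L ω)
    (hL : ∀ᵐ ω ∂Q, Q₁.rnDeriv Q ω = ENNReal.ofReal (L ω))
    (c : ℝ) (hc : 0 ≤ c)
    (φ : Ω → ℝ) (hφ : φ = Set.indicator {ω | c < L ω} (fun _ => (1:ℝ))) :
    (∫ ω, φ ω ∂Q₁ = c * (∫ ω, φ ω ∂Q) + ∫ ω, max (L ω - c) 0 ∂Q) ∧
    (∀ k : ℝ, 0 ≤ k →
      ∫ ω, φ ω ∂Q₁ ≤ k * (∫ ω, φ ω ∂Q) + ∫ ω, max (L ω - k) 0 ∂Q) := by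
  have hLtoReal : (fun ω => (Q₁.rnDeriv Q ω).toReal) =ᵐ[Q] L := by
    filter_upwards [hL, hLnn] with ω h1 h2
    rw [h1, ENNReal.toReal_ofReal h2]
  -- L is integrable under Q
  have hLint : Integrable L Q :=
    (Measure.integrable_toReal_rnDeriv (μ := Q₁) (ν := Q)).congr hLtoReal
  have hsm : MeasurableSet {ω | c < L ω} := measurableSet_lt measurable_const hLm
  have hφm : Measurable φ := by
    rw [hφ]; exact (measurable_const.indicator hsm)
  have hφ01 : ∀ ω, 0 ≤ φ ω ∧ φ ω ≤ 1 := by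
    intro ω
    rw [hφ]
    by_cases h : ω ∈ {ω | c < L ω} <;>
      simp [Set.indicator_apply, h]
  have hφint : Integrable φ Q := by
    refine ⟨hφm.aestronglyMeasurable, ?_⟩
    refine HasFiniteIntegral.of_bounded (C := 1) ?_
    filter_upwards with ω
    rw [Real.norm_eq_abs, abs_le]
    exact ⟨by linarith [(hφ01 ω).1], (hφ01 ω).2⟩
  -- change of measure: ∫ φ dQ₁ = ∫ L * φ dQ
  have hchange : ∫ ω, φ ω ∂Q₁ = ∫ ω, L ω * φ ω ∂Q := by
    rw [← MeasureTheory.integral_rnDeriv_smul hac (f := φ)]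
    refine integral_congr_ae ?_
    filter_upwards [hLtoReal] with ω h
    simp [h, smul_eq_mul]
  -- integrability of L * φ
  have hLφint : Integrable (fun ω => L ω * φ ω) Q := by
    refine hLint.mono' (hLm.mul hφm).aestronglyMeasurable ?_
    filter_upwards [hLnn] with ω h
    rw [Real.norm_eq_abs, abs_mul, abs_of_nonneg h, abs_of_nonneg (hφ01 ω).1]
    calc L ω * φ ω ≤ L ω * 1 := by
          exact mul_le_mul_of_nonneg_left (hφ01 ω).2 h
      _ = L ω := mul_one _
  have hmaxint : ∀ k : ℝ, 0 ≤ k → Integrable (fun ω => max (L ω - k) 0) Q := by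
    intro k hk
    refine hLint.mono' ((hLm.sub measurable_const).max measurable_const).aestronglyMeasurable ?_
    filter_upwards [hLnn] with ω h
    rw [Real.norm_eq_abs, abs_of_nonneg (le_max_right _ _)]
    rcases le_or_gt (L ω) k with h1 | h1
    · rw [max_eq_right (by linarith)]; exact h
    · rw [max_eq_left (by linarith)]; linarith
  constructor
  · rw [hchange]
    have : ∫ ω, L ω * φ ω ∂Q = ∫ ω, (c * φ ω + max (L ω - c) 0) ∂Q := by
      refine integral_congr_ae (Filter.Eventually.of_forall fun ω => ?_)
      rw [hφ]
      by_cases h : ω ∈ {ω | c < L ω}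
      · have hlt : c < L ω := h
        simp only [Set.indicator_of_mem h, mul_one]
        rw [max_eq_left (by linarith : (0:ℝ) ≤ L ω - c)]
        ring
      · have hle : L ω ≤ c := le_of_not_gt h
        simp [Set.indicator_of_notMem h, max_eq_right (by linarith : L ω - c ≤ 0)]
    rw [this, integral_add (hφint.const_mul c) (hmaxint c hc), integral_const_mul]
  · intro k hk
    rw [hchange]
    have h1 : ∫ ω, L ω * φ ω ∂Q ≤ ∫ ω, (k * φ ω + max (L ω - k) 0) ∂Q := by
      refine integral_mono hLφint ((hφint.const_mul k).add (hmaxint k hk)) fun ω => ?_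
      rw [hφ]
      by_cases h : ω ∈ {ω | c < L ω}
      · have hlt : c < L ω := h
        simp only [Set.indicator_of_mem h, mul_one]
        calc L ω = k + (L ω - k) := by ring
          _ ≤ k + max (L ω - k) 0 := by gcongr; exact le_max_left _ _
      · simp only [Set.indicator_of_notMem h, mul_zero, zero_add]
        positivity
    calc ∫ ω, L ω * φ ω ∂Q ≤ _ := h1
      _ = k * (∫ ω, φ ω ∂Q) + ∫ ω, max (L ω - k) 0 ∂Q := by
        rw [integral_add (hφint.const_mul k) (hmaxint k hk), integral_const_mul]
end

section
/- Let Q and P be probability measures on a measurable space with P ≪ Q and Radon–Nikodym derivative L = dP/dQ, viewed as a random variable with values in [0,∞). Let μ₁ be the distribution (image measure) of L under Q and μ₂ the distribution of L under P. Then μ₂ ≪ μ₁ and the Radon–Nikodym derivative satisfies dμ₂/dμ₁(y) = y for μ₁-almost every y. -/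
open MeasureTheory Filter Set

/-- Let `P ≪ Q` be probability measures with Radon–Nikodym derivative
`L = dP/dQ` (as a `[0,∞)`-valued random variable), let `μ₁` be the distribution of `L`
under `Q` and `μ₂` the distribution of `L` under `P`.  Then `μ₂ ≪ μ₁` and
`dμ₂/dμ₁(y) = y` for `μ₁`-almost every `y`. -/
theorem statement6
    {Ω : Type*} [MeasurableSpace Ω]
    (Q P : Measure Ω) [IsProbabilityMeasure Q] [IsProbabilityMeasure P]
    (hac : P ≪ Q)
    (L : Ω → ℝ) (hL : L = fun ω => (P.rnDeriv Q ω).toReal)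
    (μ₁ μ₂ : Measure ℝ) (hμ₁ : μ₁ = Q.map L) (hμ₂ : μ₂ = P.map L) :
    μ₂ ≪ μ₁ ∧ μ₂.rnDeriv μ₁ =ᵐ[μ₁] fun y => ENNReal.ofReal y := by
  have hLmeas : Measurable L := by
    rw [hL]; exact (Measure.measurable_rnDeriv P Q).ennreal_toReal
  have hg : Measurable fun y : ℝ => ENNReal.ofReal y := ENNReal.measurable_ofReal
  have hLfin : ∀ᵐ ω ∂Q, P.rnDeriv Q ω ≠ ⊤ := Measure.rnDeriv_ne_top P Q
  have key : μ₂ = μ₁.withDensity fun y => ENNReal.ofReal y := by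
    ext s hs
    rw [hμ₂, Measure.map_apply hLmeas hs,
      withDensity_apply _ hs, hμ₁,
      MeasureTheory.setLIntegral_map hs hg hLmeas,
      ← MeasureTheory.Measure.setLIntegral_rnDeriv hac]
    refine lintegral_congr_ae (ae_restrict_of_ae ?_)
    filter_upwards [hLfin] with ω hω
    rw [hL]
    simp [ENNReal.ofReal_toReal hω]
  have : IsProbabilityMeasure μ₁ := by
    rw [hμ₁]; exact Measure.isProbabilityMeasure_map hLmeas.aemeasurable
  constructor
  · rw [key]; exact withDensity_absolutelyContinuous _ _
  · rw [key]
    exact Measure.rnDeriv_withDensity _ hg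
end

section
/- Let g : [0,1] → ℝ be bounded and measurable with ∫₀¹ g(u) du = 0, and set σ² = ∫₀¹ g(u)² du. Let X₁, X₂, … be i.i.d. random variables uniformly distributed on [0,1]. Then, for n large enough that 1 + g(x)/√n > 0 for all x, the local asymptotic normality (LAN) expansion holds: Σ_{j=1}^n log(1 + g(X_j)/√n) − ( n^{−1/2} Σ_{j=1}^n g(X_j) − σ²/2 ) converges to 0 in probability as n → ∞. -/
open MeasureTheory ProbabilityTheory Filter Set Finset Topology

/-!
Almost surely every `X j` lies in `[0,1]`, so `a j = g (X j)` is bounded by `C`, and by the strong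
law of large numbers `(∑_{j<n} a j ²) / n → σ²`. For every such deterministic sequence the
expansion holds: with `t = a j / √n`, the Taylor bound `|log (1 + t) - t + t²/2| ≤ 2|t|³` summed over
`n` terms leaves an error `O(n^{-1/2})`. Almost sure convergence implies convergence in probability.
-/

lemma abs_log_one_add_sub_le {t : ℝ} (ht : |t| ≤ 1 / 2) :
    |Real.log (1 + t) - t + t ^ 2 / 2| ≤ 2 * |t| ^ 3 := by
  have H := Real.abs_log_sub_add_sum_range_le (x := -t) (by rw [abs_neg]; linarith) 2
  simp only [sum_range_succ, sum_range_zero] at H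
  norm_num at H
  calc |Real.log (1 + t) - t + t ^ 2 / 2| = |-t + t ^ 2 / 2 + Real.log (1 + t)| := by ring_nf
    _ ≤ |t| ^ 3 / (1 - |t|) := H
    _ ≤ 2 * |t| ^ 3 := by
      rw [div_le_iff₀ (by linarith)]
      nlinarith [pow_nonneg (abs_nonneg t) 3]

section LogExpansion

variable (a : ℕ → ℝ) {C : ℝ}

lemma abs_sum_log_remainder_le (ha : ∀ j, |a j| ≤ C) {n : ℕ} (hn : 2 * C ≤ √n) :
    |∑ j ∈ range n, (Real.log (1 + a j / √n) - a j / √n + (a j / √n) ^ 2 / 2)|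
      ≤ 2 * C ^ 3 / √n := by
  rcases Nat.eq_zero_or_pos n with rfl | hn0
  · simp
  have hs : √n ^ 2 = n := Real.sq_sqrt n.cast_nonneg
  set s := √n
  have hs0 : 0 < s := Real.sqrt_pos.2 (by exact_mod_cast hn0)
  have habs : ∀ j, |a j / s| ≤ C / s := fun j => by
    rw [abs_div, abs_of_pos hs0]; gcongr; exact ha j
  have hhalf : ∀ j, |a j / s| ≤ 1 / 2 := fun j =>
    (habs j).trans (by rw [div_le_iff₀ hs0]; linarith)
  calc _ ≤ ∑ j ∈ range n, |Real.log (1 + a j / s) - a j / s + (a j / s) ^ 2 / 2| :=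
        abs_sum_le_sum_abs _ _
    _ ≤ ∑ _j ∈ range n, 2 * (C / s) ^ 3 := sum_le_sum fun j _ =>
        (abs_log_one_add_sub_le (hhalf j)).trans (by gcongr; exact habs j)
    _ = 2 * C ^ 3 / s := by
        rw [sum_const, card_range, nsmul_eq_mul, ← hs]
        field_simp

lemma tendsto_sum_log_remainder (ha : ∀ j, |a j| ≤ C) :
    Tendsto (fun n : ℕ =>
      ∑ j ∈ range n, (Real.log (1 + a j / √n) - a j / √n + (a j / √n) ^ 2 / 2))
      atTop (𝓝 0) := by
  have hsqrt : Tendsto (fun n : ℕ => √n) atTop atTop :=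
    Real.tendsto_sqrt_atTop.comp tendsto_natCast_atTop_atTop
  refine squeeze_zero_norm' ?_ ((tendsto_const_nhds (x := 2 * C ^ 3)).div_atTop hsqrt)
  filter_upwards [hsqrt.eventually_ge_atTop (2 * C)] with n hn
  exact abs_sum_log_remainder_le a ha hn

lemma sum_log_one_add_div_sqrt_sub_eq (σ2 : ℝ) (n : ℕ) :
    ∑ j ∈ range n, Real.log (1 + a j / √n) - ((1 / √n) * ∑ j ∈ range n, a j - σ2 / 2)
      = ∑ j ∈ range n, (Real.log (1 + a j / √n) - a j / √n + (a j / √n) ^ 2 / 2)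
        + (σ2 - (∑ j ∈ range n, a j ^ 2) / n) / 2 := by
  simp only [sum_add_distrib, sum_sub_distrib, div_pow, Real.sq_sqrt n.cast_nonneg,
    ← sum_div]
  ring

theorem tendsto_sum_log_one_add_div_sqrt_sub (ha : ∀ j, |a j| ≤ C) {σ2 : ℝ}
    (hσ2 : Tendsto (fun n : ℕ => (∑ j ∈ range n, a j ^ 2) / n) atTop (𝓝 σ2)) :
    Tendsto (fun n : ℕ =>
      ∑ j ∈ range n, Real.log (1 + a j / √n) - ((1 / √n) * ∑ j ∈ range n, a j - σ2 / 2))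
      atTop (𝓝 0) := by
  have hmean : Tendsto (fun n : ℕ => (σ2 - (∑ j ∈ range n, a j ^ 2) / n) / 2) atTop (𝓝 0) := by
    simpa using ((tendsto_const_nhds (x := σ2)).sub hσ2).div_const 2
  simpa only [sum_log_one_add_div_sqrt_sub_eq, add_zero] using (tendsto_sum_log_remainder a ha).add hmean

end LogExpansion

lemma strong_law_ae_real_comp {Ω E : Type*} [MeasurableSpace Ω] [MeasurableSpace E]
    {P : Measure Ω} {μ : Measure E} {X : ℕ → Ω → E} (hXm : ∀ j, AEMeasurable (X j) P)
    (hX : ∀ j, P.map (X j) = μ) (hindep : Pairwise fun i j => IndepFun (X i) (X j) P)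
    {φ : E → ℝ} (hφ : Measurable φ) (hint : Integrable φ μ) :
    ∀ᵐ ω ∂P, Tendsto (fun n : ℕ => (∑ j ∈ range n, φ (X j ω)) / n) atTop
      (𝓝 (∫ x, φ x ∂μ)) := by
  have hident : ∀ i, IdentDistrib (φ ∘ X i) (φ ∘ X 0) P P := fun i =>
    (IdentDistrib.mk (hXm i) (hXm 0) (by rw [hX, hX])).comp hφ
  rw [← hX 0] at hint ⊢
  rw [integral_map (hXm 0) hφ.aestronglyMeasurable]
  exact strong_law_ae_real (fun i => φ ∘ X i) (hint.comp_aemeasurable (hXm 0))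
    (fun i j hij => (hindep hij).comp hφ hφ) hident

theorem statement7_general
    {Ω : Type*} [MeasurableSpace Ω] (P : Measure Ω) [IsProbabilityMeasure P]
    (g : ℝ → ℝ) (hgm : Measurable g)
    (C : ℝ) (hgb : ∀ y ∈ Set.Icc (0:ℝ) 1, |g y| ≤ C)
    (σ2 : ℝ) (hσ2 : σ2 = ∫ y in Set.Icc (0:ℝ) 1, (g y) ^ 2)
    (X : ℕ → Ω → ℝ) (hXm : ∀ j, Measurable (X j))
    (hXunif : ∀ j, P.map (X j) = volume.restrict (Set.Icc 0 1))
    (hindep : iIndepFun X P) :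
    TendstoInMeasure P
      (fun n ω =>
        (∑ j ∈ Finset.range n, Real.log (1 + g (X j ω) / Real.sqrt n))
          - ((1 / Real.sqrt n) * ∑ j ∈ Finset.range n, g (X j ω) - σ2 / 2))
      atTop (fun _ => (0:ℝ)) := by
  have hmem : ∀ᵐ ω ∂P, ∀ j, X j ω ∈ Icc (0 : ℝ) 1 := ae_all_iff.2 fun j =>
    ae_of_ae_map (hXm j).aemeasurable (by rw [hXunif j]; exact ae_restrict_mem measurableSet_Icc)
  have hint : IntegrableOn (fun y => g y ^ 2) (Icc 0 1) :=
    Measure.integrableOn_of_bounded (M := C ^ 2) measure_Icc_lt_top.ne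
      (hgm.pow_const 2).aestronglyMeasurable
      ((ae_restrict_mem measurableSet_Icc).mono fun y hy => by
        simpa [abs_pow] using pow_le_pow_left₀ (abs_nonneg _) (hgb y hy) 2)
  have hslln := strong_law_ae_real_comp (fun j => (hXm j).aemeasurable) hXunif
    (fun i j hij => hindep.indepFun hij) (hgm.pow_const 2) hint
  refine tendstoInMeasure_of_tendsto_ae (fun n => by fun_prop) ?_
  filter_upwards [hmem, hslln] with ω hω hlim
  exact tendsto_sum_log_one_add_div_sqrt_sub _ (fun j => hgb _ (hω j)) (hσ2 ▸ hlim)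

/-- **LAN expansion.** Let `g : [0,1] → ℝ` be bounded and measurable with
`∫₀¹ g = 0` and `σ² = ∫₀¹ g²`.  Let `X₁, X₂, …` be i.i.d. uniform on `[0,1]`.  Then
`Σ_{j=1}^n log(1 + g(X_j)/√n) − ( n^{−1/2} Σ_{j=1}^n g(X_j) − σ²/2 ) → 0` in probability
as `n → ∞`. -/
theorem statement7
    {Ω : Type*} [MeasurableSpace Ω] (P : Measure Ω) [IsProbabilityMeasure P]
    (g : ℝ → ℝ) (hgm : Measurable g)
    (C : ℝ) (hgb : ∀ y ∈ Set.Icc (0:ℝ) 1, |g y| ≤ C)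
    (hg0 : ∫ y in Set.Icc (0:ℝ) 1, g y = 0)
    (σ2 : ℝ) (hσ2 : σ2 = ∫ y in Set.Icc (0:ℝ) 1, (g y) ^ 2)
    (X : ℕ → Ω → ℝ) (hXm : ∀ j, Measurable (X j))
    (hXunif : ∀ j, P.map (X j) = volume.restrict (Set.Icc 0 1))
    (hindep : iIndepFun X P) :
    TendstoInMeasure P
      (fun n ω =>
        (∑ j ∈ Finset.range n, Real.log (1 + g (X j ω) / Real.sqrt n))
          - ((1 / Real.sqrt n) * ∑ j ∈ Finset.range n, g (X j ω) - σ2 / 2))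
      atTop (fun _ => (0:ℝ)) :=
  statement7_general P g hgm C hgb σ2 hσ2 X hXm hXunif hindep
end

section
/- Let g, h : [0,1] → ℝ be bounded measurable functions with ∫₀¹ g(u) du = ∫₀¹ h(u) du = 0. Then R(g) and R(h) are square integrable on [0,1] and the operator R is an isometry with respect to the L²([0,1]) inner product: ∫₀¹ R(g)(x) R(h)(x) dx = ∫₀¹ g(x) h(x) dx; in particular ∫₀¹ R(g)(x)² dx = ∫₀¹ g(x)² dx. -/
/-!
Write `P(x) = ∫₀ˣ g` and `Q(x) = ∫₀ˣ h`. Since `g` has mean zero, `∫ₓ¹ g = -P(x)`, so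
`R g = g + P/(1-x)`, and `R g · R h - g h = (g Q + P h)/(1-x) + P Q/(1-x)²` is the a.e. derivative
of the absolutely continuous function `P Q/(1-x)` on `[0,t]` for `t < 1`. Hence
`∫₀ᵗ (R g · R h - g h) = P(t) Q(t)/(1-t)`, which is at most `C²(1-t)` in absolute value because
`|P(t)| = |∫ₜ¹ g| ≤ C(1-t)`; letting `t → 1` gives the isometry.
-/

open MeasureTheory Filter Set intervalIntegral

/-- The hazard rate derivative operator
`R(g)(x) = g(x) − (1/(1−x)) ∫ₓ¹ g(u) du`. -/
noncomputable def hazardR (g : ℝ → ℝ) (x : ℝ) : ℝ :=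
  g x - (1 / (1 - x)) * ∫ u in x..1, g u

open Topology

lemma hasDerivAt_mul_div_one_sub {P Q : ℝ → ℝ} {p q x : ℝ} (hP : HasDerivAt P p x)
    (hQ : HasDerivAt Q q x) (hx : x ≠ 1) :
    HasDerivAt (fun y => P y * Q y / (1 - y))
      ((p * Q x + P x * q) / (1 - x) + P x * Q x / (1 - x) ^ 2) x := by
  have hx' : 1 - x ≠ 0 := sub_ne_zero.2 hx.symm
  refine ((hP.fun_mul hQ).fun_div ((hasDerivAt_id' x).const_sub 1) hx').congr_deriv ?_
  field_simp
  ring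

lemma intervalIntegrable_of_abs_le {f : ℝ → ℝ} {C : ℝ} (hfm : Measurable f)
    (hfb : ∀ y ∈ Icc (0:ℝ) 1, |f y| ≤ C) : IntervalIntegrable f volume 0 1 :=
  (intervalIntegrable_iff_integrableOn_Icc_of_le zero_le_one).2 <| .of_bound measure_Icc_lt_top
    hfm.aestronglyMeasurable C (ae_restrict_of_forall_mem measurableSet_Icc hfb)

lemma integrableOn_mul_of_abs_le {φ ψ : ℝ → ℝ} {C : ℝ}
    (hφ : AEStronglyMeasurable φ (volume.restrict (Icc (0:ℝ) 1)))
    (hψ : AEStronglyMeasurable ψ (volume.restrict (Icc (0:ℝ) 1)))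
    (hφb : ∀ x ∈ Icc (0:ℝ) 1, |φ x| ≤ C) (hψb : ∀ x ∈ Icc (0:ℝ) 1, |ψ x| ≤ C) :
    IntegrableOn (fun x => φ x * ψ x) (Icc 0 1) := by
  refine .of_bound measure_Icc_lt_top (hφ.mul hψ) (C * C)
    (ae_restrict_of_forall_mem measurableSet_Icc fun x hx => ?_)
  rw [Real.norm_eq_abs, abs_mul]
  exact mul_le_mul (hφb x hx) (hψb x hx) (abs_nonneg _) ((abs_nonneg _).trans (hφb x hx))

section
variable {f g : ℝ → ℝ} {C x : ℝ}

lemma primitive_eq_neg_integral (hf : IntervalIntegrable f volume 0 1)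
    (hf0 : ∫ u in 0..1, f u = 0) (hx : x ∈ Icc (0:ℝ) 1) :
    ∫ u in 0..x, f u = -∫ u in x..1, f u := by
  have hfx : IntervalIntegrable f volume 0 x :=
    hf.mono_set (uIcc_subset_uIcc_left (by simpa [uIcc_of_le zero_le_one] using hx))
  rw [← integral_interval_sub_left hf hfx, hf0, zero_sub, neg_neg]

lemma hazardR_eq_add_primitive_div (hf : IntervalIntegrable f volume 0 1)
    (hf0 : ∫ u in 0..1, f u = 0) (hx : x ∈ Icc (0:ℝ) 1) :
    hazardR f x = f x + (∫ u in 0..x, f u) / (1 - x) := by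
  rw [hazardR, primitive_eq_neg_integral hf hf0 hx]
  ring

lemma abs_primitive_le (hf : IntervalIntegrable f volume 0 1) (hf0 : ∫ u in 0..1, f u = 0)
    (hfb : ∀ y ∈ Icc (0:ℝ) 1, |f y| ≤ C) (hx : x ∈ Icc (0:ℝ) 1) :
    |∫ u in 0..x, f u| ≤ C * (1 - x) := by
  rw [primitive_eq_neg_integral hf hf0 hx, abs_neg, ← abs_of_nonneg (sub_nonneg.2 hx.2)]
  simp only [← Real.norm_eq_abs]
  refine norm_integral_le_of_norm_le_const fun y hy => hfb y ?_
  rw [uIoc_of_le hx.2] at hy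
  exact ⟨hx.1.trans hy.1.le, hy.2⟩

lemma abs_hazardR_le (hf : IntervalIntegrable f volume 0 1) (hf0 : ∫ u in 0..1, f u = 0)
    (hfb : ∀ y ∈ Icc (0:ℝ) 1, |f y| ≤ C) (hx : x ∈ Icc (0:ℝ) 1) :
    |hazardR f x| ≤ 2 * C := by
  have hC : 0 ≤ C := (abs_nonneg _).trans (hfb x hx)
  have hquot : |(∫ u in 0..x, f u) / (1 - x)| ≤ C := by
    rw [abs_div, abs_of_nonneg (sub_nonneg.2 hx.2)]
    calc |∫ u in 0..x, f u| / (1 - x) ≤ C * (1 - x) / (1 - x) :=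
          div_le_div_of_nonneg_right (abs_primitive_le hf hf0 hfb hx) (sub_nonneg.2 hx.2)
      _ ≤ C := by rw [mul_div_assoc]; exact mul_le_of_le_one_right hC (div_self_le_one _)
  rw [hazardR_eq_add_primitive_div hf hf0 hx, two_mul]
  exact (abs_add_le _ _).trans (add_le_add (hfb x hx) hquot)

lemma aestronglyMeasurable_hazardR (hf : IntervalIntegrable f volume 0 1) :
    AEStronglyMeasurable (hazardR f) (volume.restrict (Icc 0 1)) := by
  rw [intervalIntegrable_iff_integrableOn_Icc_of_le zero_le_one] at hf
  have hprim : ContinuousOn (fun x => ∫ u in x..1, f u) (Icc 0 1) := by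
    simpa only [uIcc_of_le zero_le_one] using
      continuousOn_primitive_interval_left (a := 0) (b := 1) (by rwa [uIcc_of_le zero_le_one])
  exact hf.aestronglyMeasurable.sub
    ((measurable_const.div (measurable_const.sub measurable_id)).aestronglyMeasurable.mul
      (hprim.aestronglyMeasurable measurableSet_Icc))

lemma integrableOn_hazardR_mul_hazardR (hf : IntervalIntegrable f volume 0 1)
    (hg : IntervalIntegrable g volume 0 1) (hf0 : ∫ u in 0..1, f u = 0)
    (hg0 : ∫ u in 0..1, g u = 0) (hfb : ∀ y ∈ Icc (0:ℝ) 1, |f y| ≤ C)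
    (hgb : ∀ y ∈ Icc (0:ℝ) 1, |g y| ≤ C) :
    IntegrableOn (fun x => hazardR f x * hazardR g x) (Icc 0 1) :=
  integrableOn_mul_of_abs_le (aestronglyMeasurable_hazardR hf) (aestronglyMeasurable_hazardR hg)
    (fun _ => abs_hazardR_le hf hf0 hfb) (fun _ => abs_hazardR_le hg hg0 hgb)

theorem integral_hazardR_mul_hazardR_sub_mul (hf : IntervalIntegrable f volume 0 1)
    (hg : IntervalIntegrable g volume 0 1) (hf0 : ∫ u in 0..1, f u = 0)
    (hg0 : ∫ u in 0..1, g u = 0) {t : ℝ} (ht : t ∈ Ico (0:ℝ) 1) :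
    ∫ x in 0..t, (hazardR f x * hazardR g x - f x * g x)
      = (∫ u in 0..t, f u) * (∫ u in 0..t, g u) / (1 - t) := by
  have hsub : uIcc 0 t ⊆ uIcc (0:ℝ) 1 :=
    uIcc_subset_uIcc_left (by simpa [uIcc_of_le zero_le_one] using Ico_subset_Icc_self ht)
  have hinv : AbsolutelyContinuousOnInterval (fun x : ℝ => (1 - x)⁻¹) 0 t := by
    refine ContDiffOn.absolutelyContinuousOnInterval
      ((contDiffOn_const.sub contDiffOn_id).inv fun x hx => ?_)
    rw [uIcc_of_le ht.1] at hx
    exact sub_ne_zero.2 (hx.2.trans_lt ht.2).ne'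
  have hF := (((hf.mono_set hsub).absolutelyContinuousOnInterval_intervalIntegral
    left_mem_uIcc).fun_mul ((hg.mono_set hsub).absolutelyContinuousOnInterval_intervalIntegral
    left_mem_uIcc)).fun_mul hinv
  have hFTC := hF.integral_deriv_eq_sub
  simp only [integral_same, mul_zero, zero_div, sub_zero, ← div_eq_mul_inv] at hFTC
  rw [← hFTC]
  refine integral_congr_ae ?_
  filter_upwards [hf.ae_hasDerivAt_integral, hg.ae_hasDerivAt_integral] with x hfx hgx hx
  rw [uIoc_of_le ht.1] at hx
  have hx01 : x ∈ Icc (0:ℝ) 1 := ⟨hx.1.le, hx.2.trans ht.2.le⟩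
  have hxI : x ∈ uIcc (0:ℝ) 1 := by rwa [uIcc_of_le zero_le_one]
  rw [(hasDerivAt_mul_div_one_sub (hfx hxI 0 left_mem_uIcc) (hgx hxI 0 left_mem_uIcc)
      (hx.2.trans_lt ht.2).ne).deriv,
    hazardR_eq_add_primitive_div hf hf0 hx01, hazardR_eq_add_primitive_div hg hg0 hx01]
  -- `ring` would expand `(1 - x) ^ 2` under the inverse
  generalize 1 - x = d
  ring

lemma tendsto_primitive_mul_primitive_div_one_sub (hf : IntervalIntegrable f volume 0 1)
    (hg : IntervalIntegrable g volume 0 1) (hf0 : ∫ u in 0..1, f u = 0)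
    (hg0 : ∫ u in 0..1, g u = 0) (hfb : ∀ y ∈ Icc (0:ℝ) 1, |f y| ≤ C)
    (hgb : ∀ y ∈ Icc (0:ℝ) 1, |g y| ≤ C) :
    Tendsto (fun t => (∫ u in 0..t, f u) * (∫ u in 0..t, g u) / (1 - t)) (𝓝[<] 1) (𝓝 0) := by
  have hlim : Tendsto (fun t : ℝ => C * C * (1 - t)) (𝓝[<] 1) (𝓝 0) :=
    ((continuous_const.mul (continuous_const.sub continuous_id)).tendsto' 1 0
      (by simp)).mono_left nhdsWithin_le_nhds
  refine squeeze_zero_norm' ?_ hlim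
  filter_upwards [Ico_mem_nhdsLT zero_lt_one] with t ht
  have hpos : 0 < 1 - t := sub_pos.2 ht.2
  have hPt := abs_primitive_le hf hf0 hfb (Ico_subset_Icc_self ht)
  have hQt := abs_primitive_le hg hg0 hgb (Ico_subset_Icc_self ht)
  rw [Real.norm_eq_abs, abs_div, abs_mul, abs_of_pos hpos, div_le_iff₀ hpos]
  calc |∫ u in 0..t, f u| * |∫ u in 0..t, g u| ≤ (C * (1 - t)) * (C * (1 - t)) :=
        mul_le_mul hPt hQt (abs_nonneg _) ((abs_nonneg _).trans hPt)
    _ = C * C * (1 - t) * (1 - t) := by ring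

theorem integral_hazardR_mul_hazardR (hf : IntervalIntegrable f volume 0 1)
    (hg : IntervalIntegrable g volume 0 1) (hf0 : ∫ u in 0..1, f u = 0)
    (hg0 : ∫ u in 0..1, g u = 0) (hfb : ∀ y ∈ Icc (0:ℝ) 1, |f y| ≤ C)
    (hgb : ∀ y ∈ Icc (0:ℝ) 1, |g y| ≤ C) :
    ∫ x in 0..1, hazardR f x * hazardR g x = ∫ x in 0..1, f x * g x := by
  have hR := integrableOn_hazardR_mul_hazardR hf hg hf0 hg0 hfb hgb
  have hfg := integrableOn_mul_of_abs_le
    ((intervalIntegrable_iff_integrableOn_Icc_of_le zero_le_one).1 hf).aestronglyMeasurable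
    ((intervalIntegrable_iff_integrableOn_Icc_of_le zero_le_one).1 hg).aestronglyMeasurable hfb hgb
  have hφ : IntegrableOn (fun x => hazardR f x * hazardR g x - f x * g x) (uIcc 0 1) := by
    rw [uIcc_of_le zero_le_one]
    exact hR.sub hfg
  rw [← sub_eq_zero, ← integral_sub
    ((intervalIntegrable_iff_integrableOn_Icc_of_le zero_le_one).2 hR)
    ((intervalIntegrable_iff_integrableOn_Icc_of_le zero_le_one).2 hfg)]
  have hcont := ((continuousOn_primitive_interval hφ).continuousWithinAt
    right_mem_uIcc).mono_of_mem_nhdsWithin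
      (by rw [uIcc_of_le zero_le_one]; exact Icc_mem_nhdsLT zero_lt_one)
  refine tendsto_nhds_unique hcont.tendsto
    ((tendsto_primitive_mul_primitive_div_one_sub hf hg hf0 hg0 hfb hgb).congr' ?_)
  filter_upwards [Ico_mem_nhdsLT zero_lt_one] with t ht
  exact (integral_hazardR_mul_hazardR_sub_mul hf hg hf0 hg0 ht).symm

end

/-- **R is an isometry.** Let `g, h : [0,1] → ℝ` be bounded measurable with
`∫₀¹ g = ∫₀¹ h = 0`.  Then `R(g)` and `R(h)` are square integrable on `[0,1]` and
`∫₀¹ R(g) R(h) = ∫₀¹ g h`; in particular `∫₀¹ R(g)² = ∫₀¹ g²`. -/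
theorem statement10
    (g h : ℝ → ℝ) (hgm : Measurable g) (hhm : Measurable h)
    (C : ℝ) (hgb : ∀ y ∈ Set.Icc (0:ℝ) 1, |g y| ≤ C) (hhb : ∀ y ∈ Set.Icc (0:ℝ) 1, |h y| ≤ C)
    (hg0 : ∫ y in Set.Icc (0:ℝ) 1, g y = 0)
    (hh0 : ∫ y in Set.Icc (0:ℝ) 1, h y = 0) :
    IntegrableOn (fun x => (hazardR g x) ^ 2) (Set.Icc 0 1) volume ∧
    IntegrableOn (fun x => (hazardR h x) ^ 2) (Set.Icc 0 1) volume ∧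
    (∫ x in Set.Icc (0:ℝ) 1, hazardR g x * hazardR h x = ∫ x in Set.Icc (0:ℝ) 1, g x * h x) ∧
    (∫ x in Set.Icc (0:ℝ) 1, (hazardR g x) ^ 2 = ∫ x in Set.Icc (0:ℝ) 1, (g x) ^ 2) := by
  have hgi := intervalIntegrable_of_abs_le hgm hgb
  have hhi := intervalIntegrable_of_abs_le hhm hhb
  simp only [integral_Icc_eq_integral_Ioc, ← integral_of_le zero_le_one, sq] at hg0 hh0 ⊢
  exact ⟨integrableOn_hazardR_mul_hazardR hgi hgi hg0 hg0 hgb hgb,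
    integrableOn_hazardR_mul_hazardR hhi hhi hh0 hh0 hhb hhb,
    integral_hazardR_mul_hazardR hgi hhi hg0 hh0 hgb hhb,
    integral_hazardR_mul_hazardR hgi hgi hg0 hg0 hgb hgb⟩
end

section
/- Define L(γ)(x) = γ(x) − ∫₀ˣ γ(u)/(1−u) du for x ∈ [0,1). Then: (a) for every bounded measurable g : [0,1] → ℝ with ∫₀¹ g(u) du = 0 one has L(R(g)) = g Lebesgue-almost everywhere on [0,1]; (b) for every bounded measurable γ : [0,1] → ℝ one has ∫₀¹ L(γ)(x) dx = 0 and R(L(γ)) = γ Lebesgue-almost everywhere on [0,1]. Thus L is the inverse of the isometry R. -/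
/-!
Write `F(x) = ∫₀ˣ g` and `Γ(x) = ∫₀ˣ γ(u)/(1-u) du`. Both directions rest on the Fubini swap
`∫₀ˣ φ(u) ∫₀ᵘ f = ∫₀ˣ (∫ₜˣ φ) f(t) dt`. Since `∫₀¹ g = 0` we have `∫ᵤ¹ g = -F(u)`, and the
swap with `φ = (1-u)⁻²` gives `∫₀ˣ R(g)(u)/(1-u) du = F(x)/(1-x)`, which is `L(R g) = g`.
With `φ = 1` it gives `∫₀ˣ L(γ) = (1-x) Γ(x)`. As `|Γ(x)| ≤ C log(1/(1-x))`, letting `x → 1`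
yields `∫₀¹ L(γ) = 0`, and then `∫ₓ¹ L(γ) = -(1-x) Γ(x)` is exactly `R(L γ) = γ`.
-/

open MeasureTheory Filter Set intervalIntegral

/-- The inverse operator `L(γ)(x) = γ(x) − ∫₀ˣ γ(u)/(1−u) du`. -/
noncomputable def hazardL (γ : ℝ → ℝ) (x : ℝ) : ℝ :=
  γ x - ∫ u in (0:ℝ)..x, γ u / (1 - u)

open Real Topology

theorem integral_mul_primitive_eq_integral_tail_mul {φ f : ℝ → ℝ} {a b : ℝ} (hab : a ≤ b)
    (hφ : IntervalIntegrable φ volume a b) (hf : IntervalIntegrable f volume a b) :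
    ∫ u in a..b, φ u * ∫ t in a..u, f t = ∫ t in a..b, (∫ u in t..b, φ u) * f t := by
  rw [intervalIntegrable_iff_integrableOn_Ioc_of_le hab] at hφ hf
  set μ := volume.restrict (Ioc a b)
  set T := {p : ℝ × ℝ | p.2 ≤ p.1}
  have hint : Integrable (T.indicator fun p => φ p.1 * f p.2) (μ.prod μ) :=
    (hφ.mul_prod hf).indicator (measurableSet_le measurable_snd measurable_fst)
  rw [integral_of_le hab, integral_of_le hab]
  convert integral_integral_swap (f := fun u t => T.indicator (fun p => φ p.1 * f p.2) (u, t))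
    hint using 1
  · refine setIntegral_congr_fun measurableSet_Ioc fun u hu => ?_
    change _ = ∫ t in Ioc a b, (Iic u).indicator (fun t => φ u * f t) t
    rw [setIntegral_indicator measurableSet_Iic, Ioc_inter_Iic, inf_eq_right.2 hu.2,
      MeasureTheory.integral_const_mul, integral_of_le hu.1.le]
  · refine setIntegral_congr_fun measurableSet_Ioc fun t ht => ?_
    change _ = ∫ u in Ioc a b, (Ici t).indicator (fun u => φ u * f t) u
    have hset : Ioc a b ∩ Ici t = Icc t b := by
      ext u
      simp only [mem_inter_iff, mem_Ioc, mem_Ici, mem_Icc]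
      exact ⟨fun ⟨⟨_, h⟩, h'⟩ => ⟨h', h⟩,
        fun ⟨h', h⟩ => ⟨⟨ht.1.trans_le h', h⟩, h'⟩⟩
    rw [setIntegral_indicator measurableSet_Ici, hset, MeasureTheory.integral_mul_const,
      integral_Icc_eq_integral_Ioc, integral_of_le ht.2]

theorem integrableOn_Icc_of_abs_le {f : ℝ → ℝ} {a b C : ℝ} (hf : Measurable f)
    (hC : ∀ y ∈ Icc a b, |f y| ≤ C) : IntegrableOn f (Icc a b) :=
  Measure.integrableOn_of_bounded (by simp) hf.aestronglyMeasurable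
    ((ae_restrict_mem measurableSet_Icc).mono fun y hy => hC y hy)

theorem MeasureTheory.IntegrableOn.intervalIntegrable_of_mem_Icc {f : ℝ → ℝ} {a b c d : ℝ}
    (hf : IntegrableOn f (Icc a b)) (hc : c ∈ Icc a b) (hd : d ∈ Icc a b) :
    IntervalIntegrable f volume c d :=
  (hf.mono_set (uIcc_subset_Icc hc hd)).intervalIntegrable

theorem integral_tail_eq_neg_of_integral_eq_zero {f : ℝ → ℝ} {a b x : ℝ}
    (hf : IntegrableOn f (Icc a b)) (h0 : ∫ t in a..b, f t = 0) (hx : x ∈ Icc a b) :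
    ∫ t in x..b, f t = -∫ t in a..x, f t := by
  have ha : a ∈ Icc a b := ⟨le_rfl, hx.1.trans hx.2⟩
  rw [← integral_interval_sub_left (hf.intervalIntegrable_of_mem_Icc ha ⟨ha.2, le_rfl⟩)
    (hf.intervalIntegrable_of_mem_Icc ha hx), h0, zero_sub]

theorem integral_inv_one_sub {a b : ℝ} (ha : a < 1) (hb : b < 1) :
    ∫ u in a..b, (1 - u)⁻¹ = log (1 - a) - log (1 - b) := by
  rw [intervalIntegral.integral_comp_sub_left (fun x => x⁻¹),
    integral_inv_of_pos (by linarith) (by linarith), log_div (by linarith) (by linarith)]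

theorem sub_ne_zero_of_mem_uIcc {a b c u : ℝ} (ha : a < c) (hb : b < c) (hu : u ∈ uIcc a b) :
    c - u ≠ 0 :=
  (sub_pos.2 ((max_lt ha hb).trans_le' hu.2)).ne'

theorem continuousOn_inv_one_sub {a b : ℝ} (ha : a < 1) (hb : b < 1) :
    ContinuousOn (fun u => (1 - u)⁻¹) (uIcc a b) :=
  (continuous_const.sub continuous_id).continuousOn.inv₀ fun _ => sub_ne_zero_of_mem_uIcc ha hb

theorem intervalIntegrable_inv_one_sub_sq {a b : ℝ} (ha : a < 1) (hb : b < 1) :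
    IntervalIntegrable (fun u => ((1 - u) ^ 2)⁻¹) volume a b :=
  ContinuousOn.intervalIntegrable <|
    ((continuous_const.sub continuous_id).pow 2).continuousOn.inv₀
      fun _ hu => pow_ne_zero 2 (sub_ne_zero_of_mem_uIcc ha hb hu)

theorem integral_inv_one_sub_sq {a b : ℝ} (ha : a < 1) (hb : b < 1) :
    ∫ u in a..b, ((1 - u) ^ 2)⁻¹ = (1 - b)⁻¹ - (1 - a)⁻¹ :=
  integral_eq_sub_of_hasDerivAt (f := fun u => (1 - u)⁻¹)
    (fun u hu => (((hasDerivAt_id u).const_sub 1).inv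
      (sub_ne_zero_of_mem_uIcc ha hb hu)).congr_deriv (by simp))
    (intervalIntegrable_inv_one_sub_sq ha hb)

section HazardOperators

variable {g γ : ℝ → ℝ} {C x : ℝ}

theorem intervalIntegrable_div_one_sub (hg : IntegrableOn g (Icc 0 1)) (hx : x ∈ Ico 0 1) :
    IntervalIntegrable (fun u => g u / (1 - u)) volume 0 x :=
  (hg.intervalIntegrable_of_mem_Icc ⟨le_rfl, zero_le_one⟩
    (Ico_subset_Icc_self hx)).mul_continuousOn (continuousOn_inv_one_sub (by norm_num) hx.2)

theorem hazardR_eq_add_primitive_div_s11 (hg : IntegrableOn g (Icc 0 1))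
    (hg0 : ∫ t in 0..1, g t = 0) {u : ℝ} (hu : u ∈ Icc 0 1) :
    hazardR g u = g u + (∫ t in 0..u, g t) / (1 - u) := by
  rw [hazardR, integral_tail_eq_neg_of_integral_eq_zero hg hg0 hu]
  ring

theorem integral_inv_one_sub_sq_mul_primitive (hg : IntegrableOn g (Icc 0 1))
    (hx : x ∈ Ico 0 1) :
    ∫ u in 0..x, ((1 - u) ^ 2)⁻¹ * ∫ t in 0..u, g t
      = (∫ t in 0..x, g t) / (1 - x) - ∫ t in 0..x, g t / (1 - t) := by
  have hgx := hg.intervalIntegrable_of_mem_Icc ⟨le_rfl, zero_le_one⟩ (Ico_subset_Icc_self hx)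
  rw [integral_mul_primitive_eq_integral_tail_mul hx.1
    (intervalIntegrable_inv_one_sub_sq (by norm_num) hx.2) hgx]
  calc _ = ∫ t in 0..x, ((1 - x)⁻¹ * g t - g t / (1 - t)) := by
        refine integral_congr fun t ht => ?_
        rw [uIcc_of_le hx.1] at ht
        rw [integral_inv_one_sub_sq (ht.2.trans_lt hx.2) hx.2]
        ring
    _ = _ := by
        rw [integral_sub (hgx.const_mul _) (intervalIntegrable_div_one_sub hg hx),
          intervalIntegral.integral_const_mul]
        ring

theorem hazardL_hazardR (hg : IntegrableOn g (Icc 0 1)) (hg0 : ∫ t in 0..1, g t = 0)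
    (hx : x ∈ Ico 0 1) : hazardL (hazardR g) x = g x := by
  have hF : ContinuousOn (fun u => ∫ t in 0..u, g t) (uIcc 0 x) :=
    continuousOn_primitive_interval' (hg.intervalIntegrable_of_mem_Icc ⟨le_rfl, zero_le_one⟩
      (Ico_subset_Icc_self hx)) left_mem_uIcc
  have hlt : ∀ u ∈ uIcc 0 x, 1 - u ≠ 0 := fun u => sub_ne_zero_of_mem_uIcc (by norm_num) hx.2
  have hsplit : ∫ u in 0..x, hazardR g u / (1 - u)
      = ∫ u in 0..x, (g u / (1 - u) + ((1 - u) ^ 2)⁻¹ * ∫ t in 0..u, g t) := by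
    refine integral_congr fun u hu => ?_
    rw [hazardR_eq_add_primitive_div_s11 hg hg0
      (uIcc_subset_Icc ⟨le_rfl, zero_le_one⟩ (Ico_subset_Icc_self hx) hu)]
    field_simp [hlt u hu]
  rw [hazardL, hsplit, intervalIntegral.integral_add (intervalIntegrable_div_one_sub hg hx)
    ((intervalIntegrable_inv_one_sub_sq (by norm_num) hx.2).mul_continuousOn hF),
    integral_inv_one_sub_sq_mul_primitive hg hx,
    hazardR_eq_add_primitive_div_s11 hg hg0 (Ico_subset_Icc_self hx)]
  ring

theorem continuousOn_primitive_div_one_sub (hγ : IntegrableOn γ (Icc 0 1)) :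
    ContinuousOn (fun y => ∫ u in 0..y, γ u / (1 - u)) (Ico 0 1) := by
  intro y ⟨hy0, hy1⟩
  obtain ⟨b, hyb, hb1⟩ := exists_between hy1
  have hb : b ∈ Ico 0 1 := ⟨hy0.trans hyb.le, hb1⟩
  have hcont := continuousOn_primitive_interval' (intervalIntegrable_div_one_sub hγ hb)
    left_mem_uIcc
  rw [uIcc_of_le hb.1] at hcont
  exact (hcont y ⟨hy0, hyb.le⟩).mono_of_mem_nhdsWithin
    (mem_nhdsWithin.2 ⟨Iio b, isOpen_Iio, hyb, fun t ht => ⟨ht.2.1, ht.1.le⟩⟩)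

theorem abs_integral_div_one_sub_le (hγb : ∀ y ∈ Icc 0 1, |γ y| ≤ C) (hx : x ∈ Ico 0 1) :
    |∫ u in 0..x, γ u / (1 - u)| ≤ C * -log (1 - x) := by
  have hinv := integral_inv_one_sub (by norm_num : (0:ℝ) < 1) hx.2
  rw [sub_zero, log_one, zero_sub] at hinv
  rw [← hinv, ← intervalIntegral.integral_const_mul, ← Real.norm_eq_abs]
  refine norm_integral_le_of_norm_le hx.1 (ae_of_all _ fun u hu => ?_) ?_
  · have h1u : 0 < 1 - u := by linarith [hu.2, hx.2]
    rw [norm_div, Real.norm_eq_abs, Real.norm_of_nonneg h1u.le, div_eq_mul_inv]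
    exact mul_le_mul_of_nonneg_right (hγb u ⟨hu.1.le, by linarith [hu.2, hx.2]⟩) (by positivity)
  · exact (continuousOn_inv_one_sub (by norm_num) hx.2).intervalIntegrable.const_mul C

theorem integral_hazardL_eq_one_sub_mul (hγ : IntegrableOn γ (Icc 0 1)) (hx : x ∈ Ico 0 1) :
    ∫ y in 0..x, hazardL γ y = (1 - x) * ∫ u in 0..x, γ u / (1 - u) := by
  have hγx := hγ.intervalIntegrable_of_mem_Icc ⟨le_rfl, zero_le_one⟩ (Ico_subset_Icc_self hx)
  have hfx := intervalIntegrable_div_one_sub hγ hx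
  have hΓ : ∫ y in 0..x, ∫ u in 0..y, γ u / (1 - u)
      = ∫ t in 0..x, (x - t) * (γ t / (1 - t)) := by
    simpa using integral_mul_primitive_eq_integral_tail_mul (φ := fun _ => 1) hx.1
      intervalIntegrable_const hfx
  have hΓx : IntervalIntegrable (fun y => ∫ u in 0..y, γ u / (1 - u)) volume 0 x :=
    (continuousOn_primitive_interval' hfx left_mem_uIcc).intervalIntegrable
  calc ∫ y in 0..x, hazardL γ y
      = (∫ y in 0..x, γ y) - ∫ t in 0..x, (x - t) * (γ t / (1 - t)) := by
        rw [← hΓ, ← intervalIntegral.integral_sub hγx hΓx]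
        rfl
    _ = ∫ t in 0..x, (1 - x) * (γ t / (1 - t)) := by
        rw [← intervalIntegral.integral_sub hγx (hfx.continuousOn_mul (by fun_prop))]
        refine integral_congr fun t ht => ?_
        have := sub_ne_zero_of_mem_uIcc (by norm_num) hx.2 ht
        field_simp
        ring
    _ = (1 - x) * ∫ u in 0..x, γ u / (1 - u) := intervalIntegral.integral_const_mul _ _

theorem integrableOn_hazardL (hγ : IntegrableOn γ (Icc 0 1))
    (hγb : ∀ y ∈ Icc 0 1, |γ y| ≤ C) : IntegrableOn (hazardL γ) (Icc 0 1) := by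
  have hlog : IntegrableOn (fun y => C * -log (1 - y)) (Icc 0 1) := by
    have := ((intervalIntegrable_log' (a := 0) (b := 1)).comp_sub_left 1).neg.const_mul C
    rw [sub_zero, sub_self, IntervalIntegrable.symm_iff,
      intervalIntegrable_iff_integrableOn_Ioc_of_le zero_le_one] at this
    rwa [integrableOn_Icc_iff_integrableOn_Ioc]
  have hΓ : IntegrableOn (fun y => ∫ u in 0..y, γ u / (1 - u)) (Icc 0 1) := by
    rw [integrableOn_Icc_iff_integrableOn_Ico] at hlog ⊢
    refine hlog.mono' ((continuousOn_primitive_div_one_sub hγ).aestronglyMeasurable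
      measurableSet_Ico) ?_
    filter_upwards [ae_restrict_mem measurableSet_Ico] with y hy
    exact abs_integral_div_one_sub_le hγb hy
  exact hγ.sub hΓ

theorem tendsto_one_sub_mul_integral_div_one_sub (hγb : ∀ y ∈ Icc 0 1, |γ y| ≤ C) :
    Tendsto (fun b => (1 - b) * ∫ u in 0..b, γ u / (1 - u)) (𝓝[<] 1) (𝓝 0) := by
  have hmul_log : Tendsto (fun b : ℝ => -C * ((1 - b) * log (1 - b))) (𝓝[<] 1) (𝓝 0) := by
    have hc : Continuous fun b : ℝ => -C * ((1 - b) * log (1 - b)) := by fun_prop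
    simpa using (hc.tendsto 1).mono_left nhdsWithin_le_nhds
  refine squeeze_zero_norm'
    (eventually_of_mem (Ioo_mem_nhdsLT zero_lt_one) fun b hb => ?_) hmul_log
  have h1b : 0 ≤ 1 - b := by linarith [hb.2]
  rw [norm_mul, Real.norm_of_nonneg h1b, Real.norm_eq_abs]
  calc (1 - b) * |∫ u in 0..b, γ u / (1 - u)| ≤ (1 - b) * (C * -log (1 - b)) :=
        mul_le_mul_of_nonneg_left (abs_integral_div_one_sub_le hγb ⟨hb.1.le, hb.2⟩) h1b
    _ = -C * ((1 - b) * log (1 - b)) := by ring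

theorem integral_hazardL_eq_zero (hγ : IntegrableOn γ (Icc 0 1))
    (hγb : ∀ y ∈ Icc 0 1, |γ y| ≤ C) : ∫ y in 0..1, hazardL γ y = 0 := by
  have hL := integrableOn_hazardL hγ hγb
  have hcont : ContinuousOn (fun b => ∫ y in 0..b, hazardL γ y) (Icc 0 1) := by
    rw [← uIcc_of_le zero_le_one] at hL ⊢
    exact continuousOn_primitive_interval hL
  have hleft : Tendsto (fun b => ∫ y in 0..b, hazardL γ y) (𝓝[<] 1)
      (𝓝 (∫ y in 0..1, hazardL γ y)) := by
    rw [← nhdsWithin_Ioo_eq_nhdsLT zero_lt_one]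
    exact (hcont 1 ⟨zero_le_one, le_rfl⟩).tendsto.mono_left
      (nhdsWithin_mono _ Ioo_subset_Icc_self)
  refine tendsto_nhds_unique (hleft.congr' ?_) (tendsto_one_sub_mul_integral_div_one_sub hγb)
  exact eventually_of_mem (Ioo_mem_nhdsLT zero_lt_one) fun b hb =>
    integral_hazardL_eq_one_sub_mul hγ ⟨hb.1.le, hb.2⟩

theorem hazardR_hazardL (hγ : IntegrableOn γ (Icc 0 1)) (hγb : ∀ y ∈ Icc 0 1, |γ y| ≤ C)
    (hx : x ∈ Ico 0 1) : hazardR (hazardL γ) x = γ x := by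
  have h1x : 1 - x ≠ 0 := sub_ne_zero.2 hx.2.ne'
  rw [hazardR, integral_tail_eq_neg_of_integral_eq_zero (integrableOn_hazardL hγ hγb)
    (integral_hazardL_eq_zero hγ hγb) (Ico_subset_Icc_self hx),
    integral_hazardL_eq_one_sub_mul hγ hx, hazardL]
  field_simp
  ring

end HazardOperators

/-- **L is the inverse of R.**
(a) for every bounded measurable `g : [0,1] → ℝ` with `∫₀¹ g = 0` one has `L(R(g)) = g`
Lebesgue-a.e. on `[0,1]`;
(b) for every bounded measurable `γ : [0,1] → ℝ` one has `∫₀¹ L(γ) = 0` and `R(L(γ)) = γ`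
Lebesgue-a.e. on `[0,1]`. -/
theorem statement11
    (g γ : ℝ → ℝ) (hgm : Measurable g) (hγm : Measurable γ)
    (C : ℝ) (hgb : ∀ y ∈ Set.Icc (0:ℝ) 1, |g y| ≤ C) (hγb : ∀ y ∈ Set.Icc (0:ℝ) 1, |γ y| ≤ C)
    (hg0 : ∫ y in Set.Icc (0:ℝ) 1, g y = 0) :
    (∀ᵐ x ∂(volume.restrict (Set.Icc (0:ℝ) 1)), hazardL (hazardR g) x = g x) ∧
    (∫ x in Set.Icc (0:ℝ) 1, hazardL γ x = 0) ∧
    (∀ᵐ x ∂(volume.restrict (Set.Icc (0:ℝ) 1)), hazardR (hazardL γ) x = γ x) := by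
  have hg := integrableOn_Icc_of_abs_le hgm hgb
  have hγ := integrableOn_Icc_of_abs_le hγm hγb
  have hIcc : ∀ f : ℝ → ℝ, ∫ y in Icc (0:ℝ) 1, f y = ∫ y in 0..1, f y := fun f => by
    rw [integral_Icc_eq_integral_Ioc, integral_of_le zero_le_one]
  have hae : ∀ᵐ x ∂volume.restrict (Icc (0:ℝ) 1), x ∈ Ico (0:ℝ) 1 := by
    rw [← Measure.restrict_congr_set Ico_ae_eq_Icc]
    exact ae_restrict_mem measurableSet_Ico
  rw [hIcc] at hg0 ⊢
  exact ⟨hae.mono fun x hx => hazardL_hazardR hg hg0 hx, integral_hazardL_eq_zero hγ hγb,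
    hae.mono fun x hx => hazardR_hazardL hγ hγb hx⟩
end

section
/- Let g : [0,1] → ℝ be bounded and measurable with ∫₀¹ g(u) du = 0, let γ = R(g), and fix t ∈ [0,1). Then L(γ·1_{[0,t]})(x) = g(x) for Lebesgue-almost every x ∈ [0,t] and L(γ·1_{[0,t]})(x) = (1/(1−t)) ∫_t¹ g(u) du for Lebesgue-almost every x ∈ (t,1]; equivalently, L(γ·1_{[0,t]}) is a version of the conditional expectation E_{P₀}(g | F_{1,t}). -/
open MeasureTheory Filter Set intervalIntegral

/-!
With `m(x) = (1/(1-x)) ∫ₓ¹ g`, the product `m = (∫ₓ¹ g) · (1-x)⁻¹` of two absolutely continuous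
functions has derivative `-R(g)(x)/(1-x)` almost everywhere on `[0,1)` (Lebesgue differentiation),
so the FTC for absolutely continuous functions gives `∫₀ˣ R(g)(u)/(1-u) du = m(0) - m(x)` with
`m(0) = ∫₀¹ g = 0`. Hence `L(γ·1_{[0,t]})(x)` is `R(g)(x) + m(x) = g(x)` for `x ≤ t`, and
`0 + m(t)` for `x > t`, since the truncated integral stops at `t`.
-/

theorem hasDerivAt_inv_one_sub {u : ℝ} (hu : u ≠ 1) :
    HasDerivAt (fun v : ℝ => (1 - v)⁻¹) ((1 - u)⁻¹ ^ 2) u := by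
  have h := ((hasDerivAt_id' u).const_sub 1).inv (c := fun v : ℝ => 1 - v) (sub_ne_zero.2 hu.symm)
  rwa [neg_neg, one_div, ← inv_pow] at h

theorem absolutelyContinuousOnInterval_inv_one_sub {x : ℝ} (hx0 : 0 ≤ x) (hx1 : x < 1) :
    AbsolutelyContinuousOnInterval (fun u : ℝ => (1 - u)⁻¹) 0 x := by
  refine ContDiffOn.absolutelyContinuousOnInterval <|
    (contDiffOn_const.sub contDiffOn_id).inv fun u hu => ?_
  rw [uIcc_of_le hx0] at hu
  exact sub_ne_zero.2 (by simp only [id]; linarith [hu.2])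

theorem absolutelyContinuousOnInterval_integral_to_right {g : ℝ → ℝ} {a b x : ℝ}
    (hg : IntervalIntegrable g volume a b) (hx : x ∈ Icc a b) :
    AbsolutelyContinuousOnInterval (fun u => ∫ v in u..b, g v) a x := by
  rw [show (fun u => ∫ v in u..b, g v) = fun u => -∫ v in b..u, g v from
    funext fun u => integral_symm b u]
  refine (hg.absolutelyContinuousOnInterval_intervalIntegral (c := b) (by simp)).neg.mono ?_
  rw [uIcc_of_le hx.1, uIcc_of_le (hx.1.trans hx.2)]
  exact Icc_subset_Icc le_rfl hx.2

theorem integral_hazardR_div_one_sub {g : ℝ → ℝ} (hg : IntervalIntegrable g volume 0 1) {x : ℝ}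
    (hx0 : 0 ≤ x) (hx1 : x < 1) :
    ∫ u in (0:ℝ)..x, hazardR g u / (1 - u)
      = (∫ u in (0:ℝ)..1, g u) - 1 / (1 - x) * ∫ u in x..1, g u := by
  set H : ℝ → ℝ := fun u => ∫ v in u..1, g v
  have hprod := (absolutelyContinuousOnInterval_integral_to_right hg ⟨hx0, hx1.le⟩
    ).integral_deriv_mul_eq_sub (absolutelyContinuousOnInterval_inv_one_sub hx0 hx1)
  have hderiv : ∀ᵐ u, u ∈ uIoc (0:ℝ) x → hazardR g u / (1 - u)
      = -(deriv H u * (1 - u)⁻¹ + H u * deriv (fun v : ℝ => (1 - v)⁻¹) u) := by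
    filter_upwards [hg.ae_hasDerivAt_integral] with u hu hux
    rw [uIoc_of_le hx0] at hux
    have hu1 : u < 1 := by linarith [hux.2]
    have hH : HasDerivAt H (-g u) u := by
      rw [show H = fun u => -∫ v in 1..u, g v from funext fun u => integral_symm 1 u]
      exact (hu (by rw [uIcc_of_le zero_le_one]; exact ⟨hux.1.le, hu1.le⟩) 1 (by simp)).neg
    have h1u : (1:ℝ) - u ≠ 0 := sub_ne_zero.2 hu1.ne'
    rw [hH.deriv, (hasDerivAt_inv_one_sub hu1.ne).deriv, hazardR]
    field_simp
    ring
  rw [integral_congr_ae hderiv, intervalIntegral.integral_neg, hprod, sub_zero, inv_one]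
  ring

theorem intervalIntegral_indicator_Icc {f : ℝ → ℝ} {a t x : ℝ} (hat : a ≤ t) (hax : a ≤ x) :
    ∫ u in a..x, (Icc a t).indicator f u = ∫ u in a..min x t, f u := by
  have hset : Ioc a x ∩ Icc a t = Ioc a (min x t) := by
    ext u
    simp only [mem_inter_iff, mem_Ioc, mem_Icc, le_min_iff]
    exact ⟨fun ⟨⟨hau, hux⟩, _, hut⟩ => ⟨hau, hux, hut⟩,
      fun ⟨hau, hux, hut⟩ => ⟨⟨hau, hux⟩, hau.le, hut⟩⟩
  rw [integral_of_le hax, integral_of_le (le_min hax hat), setIntegral_indicator measurableSet_Icc,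
    hset]

/-- Let `g : [0,1] → ℝ` be bounded measurable with `∫₀¹ g = 0`, let
`γ = R(g)` and fix `t ∈ [0,1)`.  Then `L(γ·1_{[0,t]})(x) = g(x)` for a.e. `x ∈ [0,t]` and
`L(γ·1_{[0,t]})(x) = (1/(1−t)) ∫_t¹ g(u) du` for a.e. `x ∈ (t,1]`; that is,
`L(γ·1_{[0,t]})` is a version of the conditional expectation `E_{P₀}(g | F_{1,t})`. -/
theorem statement12
    (g : ℝ → ℝ) (hgm : Measurable g)
    (C : ℝ) (hgb : ∀ y ∈ Set.Icc (0:ℝ) 1, |g y| ≤ C)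
    (hg0 : ∫ y in Set.Icc (0:ℝ) 1, g y = 0)
    (t : ℝ) (ht : t ∈ Set.Ico (0:ℝ) 1)
    (γt : ℝ → ℝ) (hγt : γt = Set.indicator (Set.Icc 0 t) (hazardR g)) :
    (∀ᵐ x ∂(volume.restrict (Set.Icc (0:ℝ) t)), hazardL γt x = g x) ∧
    (∀ᵐ x ∂(volume.restrict (Set.Ioc t 1)),
      hazardL γt x = (1 / (1 - t)) * ∫ u in t..1, g u) := by
  have hg : IntervalIntegrable g volume 0 1 :=
    (intervalIntegrable_iff_integrableOn_Icc_of_le zero_le_one).2 <|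
      Measure.integrableOn_of_bounded measure_Icc_lt_top.ne hgm.aestronglyMeasurable
        (ae_restrict_of_forall_mem measurableSet_Icc hgb)
  have hg0' : ∫ u in (0:ℝ)..1, g u = 0 := by
    rw [integral_of_le zero_le_one, ← integral_Icc_eq_integral_Ioc, hg0]
  have hL : ∀ x, 0 ≤ x →
      hazardL γt x = γt x - ∫ u in (0:ℝ)..min x t, hazardR g u / (1 - u) := by
    intro x hx
    rw [hazardL, ← intervalIntegral_indicator_Icc ht.1 hx, hγt]
    congr 1
    refine integral_congr fun u _ => ?_
    by_cases hu : u ∈ Icc 0 t <;> simp [hu]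
  constructor
  · refine ae_restrict_of_forall_mem measurableSet_Icc fun x hx => ?_
    rw [hL x hx.1, min_eq_left hx.2, integral_hazardR_div_one_sub hg hx.1 (hx.2.trans_lt ht.2),
      hγt, indicator_of_mem hx, hg0', hazardR]
    ring
  · refine ae_restrict_of_forall_mem measurableSet_Ioc fun x hx => ?_
    rw [hL x (ht.1.trans hx.1.le), min_eq_right hx.1.le, integral_hazardR_div_one_sub hg ht.1 ht.2,
      hγt, indicator_of_notMem fun hxt => hx.1.not_ge hxt.2, hg0']
    ring
end

section
/- Let g : [0,1] → ℝ be bounded and measurable with ∫₀¹ g(u) du = 0, and let n satisfy √n > sup|g|. Let Q_n be the probability measure on [0,1]ⁿ with density x ↦ ∏_{j=1}^n (1 + g(x_j)/√n) with respect to Q_{0,n} = P₀ⁿ. Then for every t ∈ [0,1] the restriction of Q_n to the σ-algebra F_{n,t} has Radon–Nikodym derivative dQ_{n|F_{n,t}}/dQ_{0,n|F_{n,t}}(x) = ∏_{j=1}^n (1 + E_{P₀}(g | F_{1,t})(x_j)/√n) for Q_{0,n}-almost every x = (x₁,…,x_n). -/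
/-!
Both `Q_n` and the measure with density `∏ⱼ (1 + E_{P₀}(g | F_{1,t})(x_j)/√n)` are `n`-fold
products of the one-dimensional measures with densities `1 + g/√n` and
`1 + E_{P₀}(g | F_{1,t})/√n`, which are nonnegative because `|g| < √n`. These two
one-dimensional measures agree on `F_{1,t}`: on its generators `{y ≤ s}`, `s ≤ t`, the densities
coincide, and the total masses agree because `E_{P₀}(g | F_{1,t})` has the same integral as `g`.
Trimming commutes with finite products, so `Q_n` and the candidate measure agree on
`F_{n,t} = ⨂ F_{1,t}`; the candidate density is `F_{n,t}`-measurable, hence it is the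
Radon–Nikodym derivative.
-/

open MeasureTheory Filter Set intervalIntegral

open scoped ENNReal

section SigmaUpTo

variable {Ω : Type*}

-- With `X = Subtype.val` on `[0,1]` this is the paper's `F_{1,t}`; `F_{n,t}` is the product
-- σ-algebra of `n` copies of it.
abbrev sigmaUpTo (X : Ω → ℝ) (t : ℝ) : MeasurableSpace Ω :=
  MeasurableSpace.generateFrom {A | ∃ s ≤ t, A = {ω | X ω ≤ s}}

lemma sigmaUpTo_le [MeasurableSpace Ω] {X : Ω → ℝ} (hX : Measurable X) (t : ℝ) :
    sigmaUpTo X t ≤ ‹MeasurableSpace Ω› :=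
  MeasurableSpace.generateFrom_le fun _ ⟨_, _, hA⟩ => hA ▸ hX measurableSet_Iic

lemma comap_sigmaUpTo {Ω' : Type*} (f : Ω' → Ω) (X : Ω → ℝ) (t : ℝ) :
    (sigmaUpTo X t).comap f = sigmaUpTo (X ∘ f) t := by
  rw [sigmaUpTo, MeasurableSpace.comap_generateFrom, sigmaUpTo]
  congr 1
  ext A
  constructor
  · rintro ⟨_, ⟨s, hs, rfl⟩, rfl⟩
    exact ⟨s, hs, rfl⟩
  · rintro ⟨s, hs, rfl⟩
    exact ⟨_, ⟨s, hs, rfl⟩, rfl⟩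

lemma iSup_sigmaUpTo {ι : Type*} (X : ι → Ω → ℝ) (t : ℝ) :
    ⨆ i, sigmaUpTo (X i) t =
      MeasurableSpace.generateFrom {A | ∃ (i : ι) (s : ℝ), s ≤ t ∧ A = {ω | X i ω ≤ s}} := by
  rw [MeasurableSpace.iSup_generateFrom]
  congr 1
  ext A
  simp only [Set.mem_iUnion, Set.mem_ofPred_eq]

lemma isPiSystem_setOf_le (X : Ω → ℝ) (t : ℝ) :
    IsPiSystem {A | ∃ s ≤ t, A = {ω | X ω ≤ s}} := by
  rintro _ ⟨s, hs, rfl⟩ _ ⟨s', -, rfl⟩ -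
  refine ⟨min s s', (min_le_left _ _).trans hs, ?_⟩
  ext ω
  simp

lemma measurable_min_sigmaUpTo (X : Ω → ℝ) (t : ℝ) :
    Measurable[sigmaUpTo X t] fun ω => min (X ω) t := by
  refine measurable_of_Iic (mδ := sigmaUpTo X t) fun a => ?_
  by_cases hta : t ≤ a
  · convert @MeasurableSet.univ _ (sigmaUpTo X t)
    exact Set.eq_univ_of_forall fun ω => (min_le_right _ _).trans hta
  · refine MeasurableSpace.measurableSet_generateFrom ⟨a, (not_le.1 hta).le, ?_⟩
    ext ω
    simp [(not_le.1 hta).not_ge]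

end SigmaUpTo

lemma rnDeriv_trim_eq_of_trim_eq_withDensity {α : Type*} {m m0 : MeasurableSpace α}
    {μ ν : Measure[m0] α} (hm : m ≤ m0) [SigmaFinite (μ.trim hm)] {f : α → ℝ≥0∞}
    (hf : Measurable[m] f) (h : ν.trim hm = (μ.withDensity f).trim hm) :
    (ν.trim hm).rnDeriv (μ.trim hm) =ᵐ[μ.trim hm] f := by
  rw [h, trim_withDensity hm hf]
  exact Measure.rnDeriv_withDensity _ hf

section Pi

variable {ι : Type*} [Fintype ι] {α : ι → Type*}

lemma MeasureTheory.Measure.pi_trim {m m0 : ∀ i, MeasurableSpace (α i)} (hm : ∀ i, m i ≤ m0 i)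
    (μ : ∀ i, Measure[m0 i] (α i)) [∀ i, IsFiniteMeasure (μ i)] :
    (Measure.pi μ).trim (iSup_mono fun i => MeasurableSpace.comap_mono (hm i)) =
      @Measure.pi ι α _ m fun i => (μ i).trim (hm i) := by
  refine (@Measure.pi_eq ι α _ m (fun i => (μ i).trim (hm i)) (fun _ => inferInstance) _
    fun s hs => ?_).symm
  rw [trim_measurableSet_eq _ (@MeasurableSet.univ_pi ι α m _ _ hs), Measure.pi_pi]
  exact Finset.prod_congr rfl fun i _ => (trim_measurableSet_eq _ (hs i)).symm

lemma withDensity_ofReal_prod_eq_pi [∀ i, MeasurableSpace (α i)] (μ : ∀ i, Measure (α i))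
    [∀ i, SigmaFinite (μ i)] {φ : ∀ i, α i → ℝ} (hφ0 : ∀ i y, 0 ≤ φ i y)
    (hφ : ∀ i, Integrable (φ i) (μ i)) :
    (Measure.pi μ).withDensity (fun x => ENNReal.ofReal (∏ i, φ i (x i))) =
      Measure.pi fun i => (μ i).withDensity fun y => ENNReal.ofReal (φ i y) := by
  have := fun i => isFiniteMeasure_withDensity_ofReal (hφ i).hasFiniteIntegral
  refine (Measure.pi_eq fun s hs => ?_).symm
  rw [withDensity_apply _ (MeasurableSet.univ_pi hs),
    ← ofReal_integral_eq_lintegral_ofReal (Integrable.fintype_prod_dep hφ).restrict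
      (Eventually.of_forall fun x => Finset.prod_nonneg fun i _ => hφ0 i (x i)),
    Measure.restrict_pi_pi, integral_fintype_prod_eq_prod,
    ENNReal.ofReal_prod_of_nonneg fun i _ => integral_nonneg (hφ0 i)]
  refine Finset.prod_congr rfl fun i _ => ?_
  rw [withDensity_apply _ (hs i),
    ofReal_integral_eq_lintegral_ofReal (hφ i).restrict (Eventually.of_forall (hφ0 i))]

end Pi

lemma trim_withDensity_sigmaUpTo_eq {Ω : Type*} [MeasurableSpace Ω] {μ : Measure Ω}
    {X : Ω → ℝ} (hX : Measurable X) (t : ℝ) {f₁ f₂ : Ω → ℝ≥0∞} (hf₁ : ∫⁻ ω, f₁ ω ∂μ ≠ ∞)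
    (h_eqOn : ∀ ω, X ω ≤ t → f₁ ω = f₂ ω) (h_total : ∫⁻ ω, f₁ ω ∂μ = ∫⁻ ω, f₂ ω ∂μ) :
    (μ.withDensity f₁).trim (sigmaUpTo_le hX t) = (μ.withDensity f₂).trim (sigmaUpTo_le hX t) := by
  have := isFiniteMeasure_withDensity hf₁
  refine ext_of_generate_finite _ rfl (isPiSystem_setOf_le X t) ?_ ?_
  · rintro _ ⟨s, hs, rfl⟩
    have hmeas : MeasurableSet {ω | X ω ≤ s} := hX measurableSet_Iic
    have hmeas' : MeasurableSet[sigmaUpTo X t] {ω | X ω ≤ s} :=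
      MeasurableSpace.measurableSet_generateFrom ⟨s, hs, rfl⟩
    rw [trim_measurableSet_eq _ hmeas', trim_measurableSet_eq _ hmeas',
      withDensity_apply _ hmeas, withDensity_apply _ hmeas]
    exact setLIntegral_congr_fun hmeas fun ω hω => h_eqOn ω (le_trans hω hs)
  · rw [trim_measurableSet_eq _ MeasurableSet.univ, trim_measurableSet_eq _ MeasurableSet.univ,
      withDensity_apply _ MeasurableSet.univ, withDensity_apply _ MeasurableSet.univ,
      Measure.restrict_univ, h_total]

-- The explicit formula for `E_{P₀}(g | F_{1,t})`. At `t = 1` the factor `1 / (1 - t)` is the junk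
-- value `0`, harmlessly: on `[0,1]` the `else` branch is then never taken.
noncomputable def condExpUpTo (g : ℝ → ℝ) (t u : ℝ) : ℝ :=
  if u ≤ t then g u else (1 / (1 - t)) * ∫ v in t..1, g v

section CondExpUpTo

variable {g : ℝ → ℝ} {t : ℝ}

lemma measurable_condExpUpTo (hg : Measurable g) (t : ℝ) : Measurable (condExpUpTo g t) :=
  Measurable.ite measurableSet_Iic hg measurable_const

lemma measurable_condExpUpTo_comp {Ω : Type*} (X : Ω → ℝ) (hg : Measurable g) (t : ℝ) :
    Measurable[sigmaUpTo X t] fun ω => condExpUpTo g t (X ω) := by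
  have h_min : (fun ω => condExpUpTo g t (X ω)) =
      fun ω => if X ω ≤ t then g (min (X ω) t) else (1 / (1 - t)) * ∫ v in t..1, g v := by
    funext ω
    by_cases hω : X ω ≤ t <;> simp [condExpUpTo, hω]
  rw [h_min]
  exact Measurable.ite (MeasurableSpace.measurableSet_generateFrom ⟨t, le_rfl, rfl⟩)
    (hg.comp (measurable_min_sigmaUpTo X t)) measurable_const

lemma abs_condExpUpTo_le {C : ℝ} (hgb : ∀ y ∈ Icc (0:ℝ) 1, |g y| ≤ C) (ht : t ∈ Icc (0:ℝ) 1)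
    {u : ℝ} (hu : u ∈ Icc (0:ℝ) 1) : |condExpUpTo g t u| ≤ C := by
  by_cases hut : u ≤ t
  · simpa [condExpUpTo, hut] using hgb u hu
  have h1t : 0 < 1 - t := by linarith [hu.2, not_le.1 hut]
  have h_int : |∫ v in t..1, g v| ≤ C * (1 - t) := by
    simpa [abs_of_pos h1t] using intervalIntegral.norm_integral_le_of_norm_le_const
      fun v hv => (Real.norm_eq_abs _).trans_le <| hgb v <|
        Ioc_subset_Icc_self.trans (Icc_subset_Icc_left ht.1) ((uIoc_of_le ht.2) ▸ hv)
  rw [condExpUpTo, if_neg hut, abs_mul, abs_of_pos (one_div_pos.2 h1t)]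
  calc 1 / (1 - t) * |∫ v in t..1, g v| ≤ 1 / (1 - t) * (C * (1 - t)) := by gcongr
    _ = C := by field_simp

lemma setIntegral_Icc_condExpUpTo (hg : IntegrableOn g (Icc 0 1)) (ht : t ∈ Icc (0:ℝ) 1) :
    ∫ u in Icc 0 1, condExpUpTo g t u = ∫ u in Icc 0 1, g u := by
  have h_split : ∀ f : ℝ → ℝ, IntegrableOn f (Icc 0 t) → IntegrableOn f (Ioc t 1) →
      ∫ u in Icc 0 1, f u = (∫ u in Icc 0 t, f u) + ∫ u in Ioc t 1, f u := fun f h₁ h₂ => by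
    rw [← Icc_union_Ioc_eq_Icc ht.1 ht.2]
    exact setIntegral_union ((Iic_disjoint_Ioc le_rfl).mono_left Icc_subset_Iic_self)
      measurableSet_Ioc h₁ h₂
  have h_left : EqOn (condExpUpTo g t) g (Icc 0 t) := fun u hu => if_pos hu.2
  have h_right : EqOn (condExpUpTo g t) (fun _ => (1 / (1 - t)) * ∫ v in t..1, g v) (Ioc t 1) :=
    fun u hu => if_neg (not_le.2 hu.1)
  have hg_left : IntegrableOn g (Icc 0 t) := hg.mono_set (Icc_subset_Icc_right ht.2)
  have hg_right : IntegrableOn g (Ioc t 1) :=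
    hg.mono_set (Ioc_subset_Icc_self.trans (Icc_subset_Icc_left ht.1))
  have h_avg : ∫ u in Ioc t 1, (1 / (1 - t)) * ∫ v in t..1, g v = ∫ u in Ioc t 1, g u := by
    rw [setIntegral_const, Real.volume_real_Ioc_of_le ht.2, smul_eq_mul,
      ← intervalIntegral.integral_of_le ht.2]
    rcases eq_or_lt_of_le ht.2 with rfl | h1t
    · simp
    · field_simp [(sub_pos.2 h1t).ne']
  rw [h_split _ ((hg_left.congr_fun h_left.symm measurableSet_Icc))
      ((integrableOn_const (by simp)).congr_fun h_right.symm measurableSet_Ioc),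
    setIntegral_congr_fun measurableSet_Icc h_left, setIntegral_congr_fun measurableSet_Ioc h_right,
    h_avg, h_split g hg_left hg_right]

end CondExpUpTo

section UnitInterval

open unitInterval

variable {φ : ℝ → ℝ} {C r : ℝ}

lemma one_add_div_nonneg_of_abs_le {a : ℝ} (ha : |a| ≤ C) (hCr : C < r) : 0 ≤ 1 + a / r := by
  have hr : 0 < r := (abs_nonneg a).trans_lt (ha.trans_lt hCr)
  rw [← div_self hr.ne', ← add_div]
  exact div_nonneg (by linarith [neg_abs_le a]) hr.le

lemma integrable_comp_val_of_abs_le (hφ : Measurable φ) (hb : ∀ y ∈ Icc (0:ℝ) 1, |φ y| ≤ C) :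
    Integrable (fun y : I => φ y) :=
  Integrable.of_bound (hφ.comp measurable_subtype_coe).aestronglyMeasurable C
    (Eventually.of_forall fun y => (Real.norm_eq_abs _).trans_le (hb y y.2))

lemma integrable_one_add_div_of_abs_le (hφ : Measurable φ) (hb : ∀ y ∈ Icc (0:ℝ) 1, |φ y| ≤ C)
    (r : ℝ) : Integrable (fun y : I => 1 + φ y / r) :=
  (integrable_const 1).add ((integrable_comp_val_of_abs_le hφ hb).div_const r)

lemma lintegral_ofReal_one_add_div (hφ : Measurable φ) (hb : ∀ y ∈ Icc (0:ℝ) 1, |φ y| ≤ C)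
    (hCr : C < r) :
    ∫⁻ y : I, ENNReal.ofReal (1 + φ y / r) = ENNReal.ofReal (1 + (∫ u in Icc 0 1, φ u) / r) := by
  rw [← ofReal_integral_eq_lintegral_ofReal (integrable_one_add_div_of_abs_le hφ hb r)
      (Eventually.of_forall fun y => one_add_div_nonneg_of_abs_le (hb y y.2) hCr),
    integral_add (integrable_const 1) ((integrable_comp_val_of_abs_le hφ hb).div_const r),
    MeasureTheory.integral_div, volume_def,
    integral_subtype_comap measurableSet_Icc, ← volume_def]
  simp

lemma trim_withDensity_condExpUpTo {g : ℝ → ℝ} (hg : Measurable g)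
    (hgb : ∀ y ∈ Icc (0:ℝ) 1, |g y| ≤ C) (hCr : C < r) {t : ℝ} (ht : t ∈ Icc (0:ℝ) 1) :
    (volume.withDensity fun y : I => ENNReal.ofReal (1 + g y / r)).trim
        (sigmaUpTo_le measurable_subtype_coe t) =
      (volume.withDensity fun y : I => ENNReal.ofReal (1 + condExpUpTo g t y / r)).trim
        (sigmaUpTo_le measurable_subtype_coe t) := by
  have hg_int : IntegrableOn g (Icc 0 1) :=
    (integrableOn_iff_comap_subtypeVal measurableSet_Icc).2 (integrable_comp_val_of_abs_le hg hgb)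
  refine trim_withDensity_sigmaUpTo_eq measurable_subtype_coe t
    (by simp [lintegral_ofReal_one_add_div hg hgb hCr]) (fun y hy => by simp [condExpUpTo, hy]) ?_
  rw [lintegral_ofReal_one_add_div hg hgb hCr,
    lintegral_ofReal_one_add_div (measurable_condExpUpTo hg t)
      (fun y hy => abs_condExpUpTo_le hgb ht hy) hCr,
    setIntegral_Icc_condExpUpTo hg_int ht]

lemma trim_withDensity_pi_condExpUpTo {ι : Type*} [Fintype ι] {g : ℝ → ℝ} (hg : Measurable g)
    (hgb : ∀ y ∈ Icc (0:ℝ) 1, |g y| ≤ C) (hCr : C < r) {t : ℝ} (ht : t ∈ Icc (0:ℝ) 1)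
    (hle : @MeasurableSpace.pi ι _ (fun _ => sigmaUpTo Subtype.val t) ≤ MeasurableSpace.pi) :
    ((Measure.pi fun _ : ι => (volume : Measure I)).withDensity fun x =>
        ENNReal.ofReal (∏ i, (1 + g (x i) / r))).trim hle =
      ((Measure.pi fun _ : ι => (volume : Measure I)).withDensity fun x =>
        ENNReal.ofReal (∏ i, (1 + condExpUpTo g t (x i) / r))).trim hle := by
  have hHb : ∀ y ∈ Icc (0:ℝ) 1, |condExpUpTo g t y| ≤ C := fun y hy => abs_condExpUpTo_le hgb ht hy
  have hg_int := integrable_one_add_div_of_abs_le hg hgb r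
  have hH_int := integrable_one_add_div_of_abs_le (measurable_condExpUpTo hg t) hHb r
  have := isFiniteMeasure_withDensity_ofReal hg_int.hasFiniteIntegral
  have := isFiniteMeasure_withDensity_ofReal hH_int.hasFiniteIntegral
  rw [withDensity_ofReal_prod_eq_pi (φ := fun _ (y : I) => 1 + g y / r) _
      (fun _ y => one_add_div_nonneg_of_abs_le (hgb y y.2) hCr) fun _ => hg_int,
    withDensity_ofReal_prod_eq_pi (φ := fun _ (y : I) => 1 + condExpUpTo g t y / r) _
      (fun _ y => one_add_div_nonneg_of_abs_le (hHb y y.2) hCr) fun _ => hH_int,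
    Measure.pi_trim (fun _ => sigmaUpTo_le measurable_subtype_coe t),
    Measure.pi_trim (fun _ => sigmaUpTo_le measurable_subtype_coe t),
    trim_withDensity_condExpUpTo hg hgb hCr ht]

end UnitInterval

theorem statement13_general
    (P0 : Measure (Set.Icc (0:ℝ) 1))
    (hP0 : P0 = Measure.comap Subtype.val volume)
    (g : ℝ → ℝ) (hgm : Measurable g)
    (C : ℝ) (hgb : ∀ y ∈ Set.Icc (0:ℝ) 1, |g y| ≤ C)
    (n : ℕ) (hn : C < Real.sqrt n)
    (t : ℝ) (ht : t ∈ Set.Icc (0:ℝ) 1)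
    (Fnt : MeasurableSpace (Fin n → Set.Icc (0:ℝ) 1))
    (hFnt : Fnt = MeasurableSpace.generateFrom
      {A | ∃ (i : Fin n) (s : ℝ), s ≤ t ∧ A = {x | (x i : ℝ) ≤ s}})
    (hle : Fnt ≤ MeasurableSpace.pi)
    (Q0n Qn : @Measure (Fin n → Set.Icc (0:ℝ) 1) MeasurableSpace.pi)
    (hQ0n : Q0n = Measure.pi fun _ : Fin n => P0)
    (hQn : Qn = Q0n.withDensity fun x =>
      ENNReal.ofReal (∏ j, (1 + g (x j) / Real.sqrt n))) :
    (Qn.trim hle).rnDeriv (Q0n.trim hle)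
      =ᵐ[(Q0n.trim hle : @Measure (Fin n → Set.Icc (0:ℝ) 1) Fnt)]
        fun x => ENNReal.ofReal (∏ j,
          (1 + (if ((x j : ℝ) ≤ t) then g (x j)
                else (1 / (1 - t)) * ∫ u in t..1, g u) / Real.sqrt n)) := by
  have hP0_volume : P0 = (volume : Measure unitInterval) := hP0
  have hFnt_pi : Fnt = @MeasurableSpace.pi _ _ fun _ => sigmaUpTo Subtype.val t := by
    simp only [hFnt, MeasurableSpace.pi, comap_sigmaUpTo, iSup_sigmaUpTo]
    rfl
  subst hP0_volume hFnt_pi hQ0n hQn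
  have hH_meas : Measurable[@MeasurableSpace.pi _ _ fun _ => sigmaUpTo Subtype.val t]
      fun x : Fin n → unitInterval => ENNReal.ofReal (∏ j, (1 + condExpUpTo g t (x j) / √n)) :=
    ENNReal.measurable_ofReal.comp <| Finset.measurable_prod _ fun j _ =>
      measurable_const.add <| ((measurable_condExpUpTo_comp _ hgm t).comp
        (@measurable_pi_apply _ _ (fun _ => sigmaUpTo Subtype.val t) j)).div_const _
  exact rnDeriv_trim_eq_of_trim_eq_withDensity hle hH_meas
    (trim_withDensity_pi_condExpUpTo hgm hgb hn ht hle)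

/-- Let `g : [0,1] → ℝ` be bounded measurable with `∫₀¹ g = 0` and let `n`
satisfy `√n > sup|g|`.  Let `Q_n` be the measure on `[0,1]ⁿ` with density
`x ↦ ∏_j (1 + g(x_j)/√n)` with respect to `Q_{0,n} = P₀ⁿ` (with `P₀` the uniform
distribution on `[0,1]`).  Then for every `t ∈ [0,1]` the restriction of `Q_n` to the
σ-algebra `F_{n,t}` (generated by the indicators `x ↦ 1_{[0,s]}(x_i)`, `s ≤ t`) has
Radon–Nikodym derivative
`dQ_{n|F_{n,t}}/dQ_{0,n|F_{n,t}}(x) = ∏_j (1 + E_{P₀}(g | F_{1,t})(x_j)/√n)` for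
`Q_{0,n}`-a.e. `x`, where `E_{P₀}(g|F_{1,t})(y) = g(y)` for `y ≤ t` and
`= (1/(1−t))∫_t¹ g(u) du` for `y > t`. -/
theorem statement13
    (P0 : Measure (Set.Icc (0:ℝ) 1)) [IsProbabilityMeasure P0]
    (hP0 : P0 = Measure.comap Subtype.val volume)
    (g : ℝ → ℝ) (hgm : Measurable g)
    (C : ℝ) (hgb : ∀ y ∈ Set.Icc (0:ℝ) 1, |g y| ≤ C)
    (hg0 : ∫ y in Set.Icc (0:ℝ) 1, g y = 0)
    (n : ℕ) (hn : C < Real.sqrt n)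
    (t : ℝ) (ht : t ∈ Set.Icc (0:ℝ) 1)
    (Fnt : MeasurableSpace (Fin n → Set.Icc (0:ℝ) 1))
    (hFnt : Fnt = MeasurableSpace.generateFrom
      {A | ∃ (i : Fin n) (s : ℝ), s ≤ t ∧ A = {x | (x i : ℝ) ≤ s}})
    (hle : Fnt ≤ MeasurableSpace.pi)
    (Q0n Qn : @Measure (Fin n → Set.Icc (0:ℝ) 1) MeasurableSpace.pi)
    (hQ0n : Q0n = Measure.pi fun _ : Fin n => P0)
    (hQn : Qn = Q0n.withDensity fun x =>
      ENNReal.ofReal (∏ j, (1 + g (x j) / Real.sqrt n))) :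
    (Qn.trim hle).rnDeriv (Q0n.trim hle)
      =ᵐ[(Q0n.trim hle : @Measure (Fin n → Set.Icc (0:ℝ) 1) Fnt)]
        fun x => ENNReal.ofReal (∏ j,
          (1 + (if ((x j : ℝ) ≤ t) then g (x j)
                else (1 / (1 - t)) * ∫ u in t..1, g u) / Real.sqrt n)) :=
  statement13_general P0 hP0 g hgm C hgb n hn t ht Fnt hFnt hle Q0n Qn hQ0n hQn
end
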